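/- arXiv:2309.05215 — 7 statements merged into one kernel-verified Lean document; each statement's English description precedes it below -/
import Mathlib

section
/- At every nondegenerate u ∈ ℝ³ the inner angles are differentiable in u and satisfy ∂θ_jk^i/∂u_j (u) = h_ij^k(u)/l_ij(u) = ∂θ_ki^j/∂u_i (u), and moreover ∂θ_jk^i/∂u_i (u) = −∂θ_jk^i/∂u_j (u) − ∂θ_jk^i/∂u_k (u). -/
open Real Filter Topology

/-- Edge length of a decorated edge with inversive distance `I`, base radii `ra, rb`
and conformal factors `x, y`. -/
noncomputable def elen (I ra rb x y : ℝ) : ℝ :=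
  Real.sqrt ((Real.exp x * ra) ^ 2 + (Real.exp y * rb) ^ 2 +
    2 * I * (Real.exp x * ra) * (Real.exp y * rb))

/-- Inner angle of a Euclidean triangle opposite the side `lc`, adjacent to `la, lb`. -/
noncomputable def ang (la lb lc : ℝ) : ℝ :=
  Real.arccos ((la ^ 2 + lb ^ 2 - lc ^ 2) / (2 * la * lb))

/-- Signed distance of the edge center to the vertex with scaled radius `ra`. -/
noncomputable def dCen (I ra rb l : ℝ) : ℝ := (ra ^ 2 + I * ra * rb) / l

/-- Signed height `(d_ac - d_ab * cos th) / sin th`. -/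
noncomputable def hgt (dac dab th : ℝ) : ℝ := (dac - dab * Real.cos th) / Real.sin th

/-- Strict triangle inequalities for three side lengths. -/
def Nondeg (a b c : ℝ) : Prop := a < b + c ∧ b < c + a ∧ c < a + b

noncomputable def Lij (ri rj rk Iij Ijk Iki ui uj uk : ℝ) : ℝ := elen Iij ri rj ui uj
noncomputable def Ljk (ri rj rk Iij Ijk Iki ui uj uk : ℝ) : ℝ := elen Ijk rj rk uj uk
noncomputable def Lki (ri rj rk Iij Ijk Iki ui uj uk : ℝ) : ℝ := elen Iki rk ri uk ui

/-- Inner angle `θ_jk^i` at vertex `i`. -/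
noncomputable def ThI (ri rj rk Iij Ijk Iki ui uj uk : ℝ) : ℝ :=
  ang (Lij ri rj rk Iij Ijk Iki ui uj uk) (Lki ri rj rk Iij Ijk Iki ui uj uk)
    (Ljk ri rj rk Iij Ijk Iki ui uj uk)

/-- Inner angle `θ_ki^j` at vertex `j`. -/
noncomputable def ThJ (ri rj rk Iij Ijk Iki ui uj uk : ℝ) : ℝ :=
  ang (Lij ri rj rk Iij Ijk Iki ui uj uk) (Ljk ri rj rk Iij Ijk Iki ui uj uk)
    (Lki ri rj rk Iij Ijk Iki ui uj uk)

/-- Inner angle `θ_ij^k` at vertex `k`. -/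
noncomputable def ThK (ri rj rk Iij Ijk Iki ui uj uk : ℝ) : ℝ :=
  ang (Ljk ri rj rk Iij Ijk Iki ui uj uk) (Lki ri rj rk Iij Ijk Iki ui uj uk)
    (Lij ri rj rk Iij Ijk Iki ui uj uk)

noncomputable def Dij (ri rj rk Iij Ijk Iki ui uj uk : ℝ) : ℝ :=
  dCen Iij (Real.exp ui * ri) (Real.exp uj * rj) (Lij ri rj rk Iij Ijk Iki ui uj uk)
noncomputable def Dji (ri rj rk Iij Ijk Iki ui uj uk : ℝ) : ℝ :=
  dCen Iij (Real.exp uj * rj) (Real.exp ui * ri) (Lij ri rj rk Iij Ijk Iki ui uj uk)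
noncomputable def Djk (ri rj rk Iij Ijk Iki ui uj uk : ℝ) : ℝ :=
  dCen Ijk (Real.exp uj * rj) (Real.exp uk * rk) (Ljk ri rj rk Iij Ijk Iki ui uj uk)
noncomputable def Dkj (ri rj rk Iij Ijk Iki ui uj uk : ℝ) : ℝ :=
  dCen Ijk (Real.exp uk * rk) (Real.exp uj * rj) (Ljk ri rj rk Iij Ijk Iki ui uj uk)
noncomputable def Dki (ri rj rk Iij Ijk Iki ui uj uk : ℝ) : ℝ :=
  dCen Iki (Real.exp uk * rk) (Real.exp ui * ri) (Lki ri rj rk Iij Ijk Iki ui uj uk)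
noncomputable def Dik (ri rj rk Iij Ijk Iki ui uj uk : ℝ) : ℝ :=
  dCen Iki (Real.exp ui * ri) (Real.exp uk * rk) (Lki ri rj rk Iij Ijk Iki ui uj uk)

/-- The height `h_ij^k`. -/
noncomputable def Hijk (ri rj rk Iij Ijk Iki ui uj uk : ℝ) : ℝ :=
  hgt (Dik ri rj rk Iij Ijk Iki ui uj uk) (Dij ri rj rk Iij Ijk Iki ui uj uk)
    (ThI ri rj rk Iij Ijk Iki ui uj uk)

/-- The height `h_ik^j`. -/
noncomputable def Hikj (ri rj rk Iij Ijk Iki ui uj uk : ℝ) : ℝ :=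
  hgt (Dij ri rj rk Iij Ijk Iki ui uj uk) (Dik ri rj rk Iij Ijk Iki ui uj uk)
    (ThI ri rj rk Iij Ijk Iki ui uj uk)

/-- The height `h_jk^i`. -/
noncomputable def Hjki (ri rj rk Iij Ijk Iki ui uj uk : ℝ) : ℝ :=
  hgt (Dji ri rj rk Iij Ijk Iki ui uj uk) (Djk ri rj rk Iij Ijk Iki ui uj uk)
    (ThJ ri rj rk Iij Ijk Iki ui uj uk)

/-- The height `h_ki^j`. -/
noncomputable def Hkij (ri rj rk Iij Ijk Iki ui uj uk : ℝ) : ℝ :=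
  hgt (Dkj ri rj rk Iij Ijk Iki ui uj uk) (Dki ri rj rk Iij Ijk Iki ui uj uk)
    (ThK ri rj rk Iij Ijk Iki ui uj uk)

/-- The area `A_ijk = (1/2) l_ij l_jk sin θ_ki^j`. -/
noncomputable def Area (ri rj rk Iij Ijk Iki ui uj uk : ℝ) : ℝ :=
  (1 / 2) * Lij ri rj rk Iij Ijk Iki ui uj uk * Ljk ri rj rk Iij Ijk Iki ui uj uk *
    Real.sin (ThJ ri rj rk Iij Ijk Iki ui uj uk)

/-- Nondegeneracy of the decorated triangle at `u`. -/
def NondegT (ri rj rk Iij Ijk Iki ui uj uk : ℝ) : Prop :=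
  Nondeg (Lij ri rj rk Iij Ijk Iki ui uj uk) (Ljk ri rj rk Iij Ijk Iki ui uj uk)
    (Lki ri rj rk Iij Ijk Iki ui uj uk)


lemma elen_arg_pos {I ra rb : ℝ} (hra : 0 < ra) (hrb : 0 < rb) (hI : 0 < I) (x y : ℝ) :
    0 < (Real.exp x * ra) ^ 2 + (Real.exp y * rb) ^ 2 +
      2 * I * (Real.exp x * ra) * (Real.exp y * rb) := by
  have h1 : 0 < Real.exp x * ra := by positivity
  have h2 : 0 < Real.exp y * rb := by positivity
  positivity

lemma elen_pos {I ra rb : ℝ} (hra : 0 < ra) (hrb : 0 < rb) (hI : 0 < I) (x y : ℝ) :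
    0 < elen I ra rb x y :=
  Real.sqrt_pos.2 (elen_arg_pos hra hrb hI x y)

lemma elen_sq {I ra rb : ℝ} (hra : 0 < ra) (hrb : 0 < rb) (hI : 0 < I) (x y : ℝ) :
    (elen I ra rb x y) ^ 2 = (Real.exp x * ra) ^ 2 + (Real.exp y * rb) ^ 2 +
      2 * I * (Real.exp x * ra) * (Real.exp y * rb) :=
  Real.sq_sqrt (elen_arg_pos hra hrb hI x y).le

lemma hasDerivAt_elen_right {I ra rb : ℝ} (hra : 0 < ra) (hrb : 0 < rb) (hI : 0 < I) (x y : ℝ) :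
    HasDerivAt (fun t => elen I ra rb x t)
      (((Real.exp y * rb) ^ 2 + I * (Real.exp x * ra) * (Real.exp y * rb)) / elen I ra rb x y)
      y := by
  have hQ : HasDerivAt (fun t => (Real.exp x * ra) ^ 2 + (Real.exp t * rb) ^ 2 +
      2 * I * (Real.exp x * ra) * (Real.exp t * rb))
      (2 * (Real.exp y * rb) ^ 2 + 2 * I * (Real.exp x * ra) * (Real.exp y * rb)) y := by
    have h1 := ((Real.hasDerivAt_exp y).mul_const rb).pow 2
    have h2 := ((Real.hasDerivAt_exp y).mul_const rb).const_mul (2 * I * (Real.exp x * ra))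
    have h3 := ((hasDerivAt_const y ((Real.exp x * ra) ^ 2)).add h1).add h2
    refine h3.congr_deriv ?_
    ring
  have hpos := elen_arg_pos hra hrb hI x y
  have h := (Real.hasDerivAt_sqrt hpos.ne').comp y hQ
  have hl : elen I ra rb x y ≠ 0 := (elen_pos hra hrb hI x y).ne'
  refine h.congr_deriv ?_
  unfold elen
  field_simp

lemma hasDerivAt_elen_left {I ra rb : ℝ} (hra : 0 < ra) (hrb : 0 < rb) (hI : 0 < I) (x y : ℝ) :
    HasDerivAt (fun t => elen I ra rb t y)
      (((Real.exp x * ra) ^ 2 + I * (Real.exp x * ra) * (Real.exp y * rb)) / elen I ra rb x y)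
      x := by
  have hQ : HasDerivAt (fun t => (Real.exp t * ra) ^ 2 + (Real.exp y * rb) ^ 2 +
      2 * I * (Real.exp t * ra) * (Real.exp y * rb))
      (2 * (Real.exp x * ra) ^ 2 + 2 * I * (Real.exp x * ra) * (Real.exp y * rb)) x := by
    have h1 := ((Real.hasDerivAt_exp x).mul_const ra).pow 2
    have h2 : HasDerivAt (fun t => 2 * I * (Real.exp t * ra) * (Real.exp y * rb))
        (2 * I * (Real.exp x * ra) * (Real.exp y * rb)) x := by
      have := (((Real.hasDerivAt_exp x).mul_const ra).const_mul (2 * I)).mul_const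
        (Real.exp y * rb)
      convert this using 1
    have h3 := (h1.add (hasDerivAt_const x ((Real.exp y * rb) ^ 2))).add h2
    refine h3.congr_deriv ?_
    ring
  have hpos := elen_arg_pos hra hrb hI x y
  have h := (Real.hasDerivAt_sqrt hpos.ne').comp x hQ
  have hl : elen I ra rb x y ≠ 0 := (elen_pos hra hrb hI x y).ne'
  refine h.congr_deriv ?_
  unfold elen
  field_simp

lemma hasDerivAt_ang_comp {fa fb fc : ℝ → ℝ} {t a' b' c' : ℝ}
    (ha : HasDerivAt fa a' t) (hb : HasDerivAt fb b' t) (hc : HasDerivAt fc c' t)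
    (hA : 0 < fa t) (hB : 0 < fb t)
    (h1 : -1 < (fa t ^ 2 + fb t ^ 2 - fc t ^ 2) / (2 * fa t * fb t))
    (h2 : (fa t ^ 2 + fb t ^ 2 - fc t ^ 2) / (2 * fa t * fb t) < 1) :
    HasDerivAt (fun s => ang (fa s) (fb s) (fc s))
      ((((fa t ^ 2 + fb t ^ 2 - fc t ^ 2) / (2 * fa t * fb t)) * (a' / fa t + b' / fb t)
          - (fa t * a' + fb t * b' - fc t * c') / (fa t * fb t))
        / Real.sqrt (1 - ((fa t ^ 2 + fb t ^ 2 - fc t ^ 2) / (2 * fa t * fb t)) ^ 2)) t := by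
  set q := (fa t ^ 2 + fb t ^ 2 - fc t ^ 2) / (2 * fa t * fb t) with hq
  have hden : (2 : ℝ) * fa t * fb t ≠ 0 := by positivity
  have hN : HasDerivAt (fun s => fa s ^ 2 + fb s ^ 2 - fc s ^ 2)
      (2 * fa t * a' + 2 * fb t * b' - 2 * fc t * c') t := by
    have := ((ha.pow 2).add (hb.pow 2)).sub (hc.pow 2)
    refine this.congr_deriv ?_
    ring
  have hD : HasDerivAt (fun s => 2 * fa s * fb s) (2 * a' * fb t + 2 * fa t * b') t := by
    have := (ha.const_mul 2).mul hb
    exact this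
  have hqd := hN.div hD hden
  have hsq : (0:ℝ) < 1 - q ^ 2 := by nlinarith
  have harc := (Real.hasDerivAt_arccos (ne_of_gt h1) (ne_of_lt h2)).comp t hqd
  have hs : Real.sqrt (1 - q ^ 2) ≠ 0 := by
    positivity
  have hNq : fa t ^ 2 + fb t ^ 2 - fc t ^ 2 = q * (2 * fa t * fb t) := by
    rw [hq]; field_simp
  refine harc.congr_deriv ?_
  rw [hNq]
  set S := Real.sqrt (1 - q ^ 2) with hS
  clear_value q S
  have hfa : fa t ≠ 0 := hA.ne'
  have hfb : fb t ≠ 0 := hB.ne'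
  field_simp
  ring

lemma cos_bounds {A B C : ℝ} (hA : 0 < A) (hB : 0 < B) (hC : 0 < C)
    (h1 : A < B + C) (h2 : B < C + A) (h3 : C < A + B) :
    -1 < (A ^ 2 + B ^ 2 - C ^ 2) / (2 * A * B) ∧
      (A ^ 2 + B ^ 2 - C ^ 2) / (2 * A * B) < 1 := by
  constructor
  · rw [lt_div_iff₀ (by positivity)]
    nlinarith [mul_pos (show (0:ℝ) < A + B - C by linarith) (show (0:ℝ) < A + B + C by positivity)]
  · rw [div_lt_one (by positivity)]
    nlinarith [mul_pos (show (0:ℝ) < C + B - A by linarith) (show (0:ℝ) < C + A - B by linarith)]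

lemma one_sub_sq_pos {q : ℝ} (h1 : -1 < q) (h2 : q < 1) : 0 < 1 - q ^ 2 := by nlinarith

set_option maxHeartbeats 1000000 in
/-- Glickenstein's derivative formulas for the inner angles:
`∂θ_jk^i/∂u_j = h_ij^k / l_ij = ∂θ_ki^j/∂u_i` and
`∂θ_jk^i/∂u_i = - ∂θ_jk^i/∂u_j - ∂θ_jk^i/∂u_k`. -/
theorem angle_derivatives (ri rj rk Iij Ijk Iki : ℝ) (hri : 0 < ri) (hrj : 0 < rj) (hrk : 0 < rk)
    (hIij : 1 < Iij) (hIjk : 1 < Ijk) (hIki : 1 < Iki)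
    (ui uj uk : ℝ) (hnd : NondegT ri rj rk Iij Ijk Iki ui uj uk) :
    HasDerivAt (fun t => ThI ri rj rk Iij Ijk Iki ui t uk)
      (Hijk ri rj rk Iij Ijk Iki ui uj uk / Lij ri rj rk Iij Ijk Iki ui uj uk) uj ∧
    HasDerivAt (fun t => ThJ ri rj rk Iij Ijk Iki t uj uk)
      (Hijk ri rj rk Iij Ijk Iki ui uj uk / Lij ri rj rk Iij Ijk Iki ui uj uk) ui ∧
    ∃ dk : ℝ, HasDerivAt (fun t => ThI ri rj rk Iij Ijk Iki ui uj t) dk uk ∧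
      HasDerivAt (fun t => ThI ri rj rk Iij Ijk Iki t uj uk)
        (-(Hijk ri rj rk Iij Ijk Iki ui uj uk / Lij ri rj rk Iij Ijk Iki ui uj uk) - dk) ui := by
  have hIij0 : (0:ℝ) < Iij := by linarith
  have hIjk0 : (0:ℝ) < Ijk := by linarith
  have hIki0 : (0:ℝ) < Iki := by linarith
  -- derivative facts for the edge lengths
  have haj := hasDerivAt_elen_right (I := Iij) hri hrj hIij0 ui uj
  have hai := hasDerivAt_elen_left (I := Iij) hri hrj hIij0 ui uj
  have hcj := hasDerivAt_elen_left (I := Ijk) hrj hrk hIjk0 uj uk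
  have hck := hasDerivAt_elen_right (I := Ijk) hrj hrk hIjk0 uj uk
  have hbi := hasDerivAt_elen_right (I := Iki) hrk hri hIki0 uk ui
  have hbk := hasDerivAt_elen_left (I := Iki) hrk hri hIki0 uk ui
  have hApos := elen_pos (I := Iij) hri hrj hIij0 ui uj
  have hBpos := elen_pos (I := Iki) hrk hri hIki0 uk ui
  have hCpos := elen_pos (I := Ijk) hrj hrk hIjk0 uj uk
  have hA2 := elen_sq (I := Iij) hri hrj hIij0 ui uj
  have hB2 := elen_sq (I := Iki) hrk hri hIki0 uk ui
  have hC2 := elen_sq (I := Ijk) hrj hrk hIjk0 uj uk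
  simp only [NondegT, Nondeg, Lij, Ljk, Lki] at hnd
  obtain ⟨hn1, hn2, hn3⟩ := hnd
  set A := elen Iij ri rj ui uj with hAdef
  set B := elen Iki rk ri uk ui with hBdef
  set C := elen Ijk rj rk uj uk with hCdef
  set Ri := Real.exp ui * ri with hRidef
  set Rj := Real.exp uj * rj with hRjdef
  set Rk := Real.exp uk * rk with hRkdef
  obtain ⟨hqi1, hqi2⟩ := cos_bounds hApos hBpos hCpos (by linarith) (by linarith) (by linarith)
  obtain ⟨hqj1, hqj2⟩ := cos_bounds hApos hCpos hBpos (by linarith) (by linarith) (by linarith)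
  have H1 := hasDerivAt_ang_comp haj (hasDerivAt_const uj B) hcj hApos hBpos hqi1 hqi2
  have H2 := hasDerivAt_ang_comp hai (hasDerivAt_const ui C) hbi hApos hCpos hqj1 hqj2
  have H3 := hasDerivAt_ang_comp (hasDerivAt_const uk A) hbk hck hApos hBpos hqi1 hqi2
  have H4 := hasDerivAt_ang_comp hai hbi (hasDerivAt_const ui C) hApos hBpos hqi1 hqi2
  have hIijv : Iij = (A ^ 2 - Ri ^ 2 - Rj ^ 2) / (2 * (Ri * Rj)) := by
    rw [eq_div_iff (by positivity)]; linarith [hA2]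
  have hIjkv : Ijk = (C ^ 2 - Rj ^ 2 - Rk ^ 2) / (2 * (Rj * Rk)) := by
    rw [eq_div_iff (by positivity)]; linarith [hC2]
  have hIkiv : Iki = (B ^ 2 - Rk ^ 2 - Ri ^ 2) / (2 * (Rk * Ri)) := by
    rw [eq_div_iff (by positivity)]; linarith [hB2]
  have hRi0 : (0:ℝ) < Ri := by positivity
  have hRj0 : (0:ℝ) < Rj := by positivity
  have hRk0 : (0:ℝ) < Rk := by positivity
  have hSipos : (0:ℝ) < Real.sqrt (1 - ((A ^ 2 + B ^ 2 - C ^ 2) / (2 * A * B)) ^ 2) := by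
    exact Real.sqrt_pos.2 (one_sub_sq_pos hqi1 hqi2)
  have hSjpos : (0:ℝ) < Real.sqrt (1 - ((A ^ 2 + C ^ 2 - B ^ 2) / (2 * A * C)) ^ 2) := by
    exact Real.sqrt_pos.2 (one_sub_sq_pos hqj1 hqj2)
  refine ⟨?_, ?_, ?_⟩
  · refine H1.congr_deriv ?_
    simp only [← hAdef, ← hBdef, ← hCdef]
    simp only [Hijk, hgt, ThI, ang, Lij, Lki, Ljk, Dik, Dij, dCen, ← hAdef, ← hBdef, ← hCdef,
      ← hRidef, ← hRjdef, ← hRkdef]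
    rw [Real.cos_arccos hqi1.le hqi2.le, Real.sin_arccos]
    rw [hIijv, hIjkv, hIkiv]
    set S := Real.sqrt (1 - ((A ^ 2 + B ^ 2 - C ^ 2) / (2 * A * B)) ^ 2) with hSdef
    clear_value S
    clear_value A B C Ri Rj Rk
    field_simp
    ring
  · refine H2.congr_deriv ?_
    have e3 : B ^ 2 * (1 - ((A ^ 2 + B ^ 2 - C ^ 2) / (2 * A * B)) ^ 2)
        = C ^ 2 * (1 - ((A ^ 2 + C ^ 2 - B ^ 2) / (2 * A * C)) ^ 2) := by
      field_simp
      ring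
    have hrel : B * Real.sqrt (1 - ((A ^ 2 + B ^ 2 - C ^ 2) / (2 * A * B)) ^ 2)
        = C * Real.sqrt (1 - ((A ^ 2 + C ^ 2 - B ^ 2) / (2 * A * C)) ^ 2) := by
      rw [show B * Real.sqrt (1 - ((A ^ 2 + B ^ 2 - C ^ 2) / (2 * A * B)) ^ 2)
          = Real.sqrt (B ^ 2 * (1 - ((A ^ 2 + B ^ 2 - C ^ 2) / (2 * A * B)) ^ 2)) by
        rw [Real.sqrt_mul (by positivity), Real.sqrt_sq hBpos.le]]
      rw [show C * Real.sqrt (1 - ((A ^ 2 + C ^ 2 - B ^ 2) / (2 * A * C)) ^ 2)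
          = Real.sqrt (C ^ 2 * (1 - ((A ^ 2 + C ^ 2 - B ^ 2) / (2 * A * C)) ^ 2)) by
        rw [Real.sqrt_mul (by positivity), Real.sqrt_sq hCpos.le]]
      rw [e3]
    have hSj : Real.sqrt (1 - ((A ^ 2 + C ^ 2 - B ^ 2) / (2 * A * C)) ^ 2)
        = B * Real.sqrt (1 - ((A ^ 2 + B ^ 2 - C ^ 2) / (2 * A * B)) ^ 2) / C := by
      rw [eq_div_iff hCpos.ne']
      linarith [hrel]
    simp only [← hAdef, ← hBdef, ← hCdef]
    simp only [Hijk, hgt, ThI, ang, Lij, Lki, Ljk, Dik, Dij, dCen, ← hAdef, ← hBdef, ← hCdef,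
      ← hRidef, ← hRjdef, ← hRkdef]
    rw [Real.cos_arccos hqi1.le hqi2.le, Real.sin_arccos, hSj]
    rw [hIijv, hIkiv]
    set S := Real.sqrt (1 - ((A ^ 2 + B ^ 2 - C ^ 2) / (2 * A * B)) ^ 2) with hSdef
    clear_value S
    clear_value A B C Ri Rj Rk
    field_simp
    ring
  · refine ⟨_, H3, ?_⟩
    refine H4.congr_deriv ?_
    simp only [← hAdef, ← hBdef, ← hCdef]
    simp only [Hijk, hgt, ThI, ang, Lij, Lki, Ljk, Dik, Dij, dCen, ← hAdef, ← hBdef, ← hCdef,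
      ← hRidef, ← hRjdef, ← hRkdef]
    rw [Real.cos_arccos hqi1.le hqi2.le, Real.sin_arccos]
    rw [hIijv, hIjkv, hIkiv]
    set S := Real.sqrt (1 - ((A ^ 2 + B ^ 2 - C ^ 2) / (2 * A * B)) ^ 2) with hSdef
    clear_value S
    clear_value A B C Ri Rj Rk
    field_simp
    ring
end

section
/- At every nondegenerate u ∈ ℝ³ one has the explicit formula h_ij^k(u) = (r_i(u)^2 r_j(u)^2 r_k(u)^2)/(2 A_ijk(u) l_ij(u)) · κ_k · (κ_k(1 − I_ij^2) + κ_i γ_j + κ_j γ_i), where κ_i = 1/r_i(u), κ_j = 1/r_j(u), κ_k = 1/r_k(u), γ_i = I_jk + I_ij I_ki, γ_j = I_ki + I_ij I_jk. -/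
open Real Filter Topology

/-- The explicit formula for the height `h_ij^k`. -/
theorem hijk_formula (ri rj rk Iij Ijk Iki : ℝ) (hri : 0 < ri) (hrj : 0 < rj) (hrk : 0 < rk)
    (hIij : 1 < Iij) (hIjk : 1 < Ijk) (hIki : 1 < Iki)
    (ui uj uk : ℝ) (hnd : NondegT ri rj rk Iij Ijk Iki ui uj uk) :
    Hijk ri rj rk Iij Ijk Iki ui uj uk =
      (Real.exp ui * ri) ^ 2 * (Real.exp uj * rj) ^ 2 * (Real.exp uk * rk) ^ 2 /
          (2 * Area ri rj rk Iij Ijk Iki ui uj uk * Lij ri rj rk Iij Ijk Iki ui uj uk) *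
        (1 / (Real.exp uk * rk)) *
        ((1 / (Real.exp uk * rk)) * (1 - Iij ^ 2) +
          (1 / (Real.exp ui * ri)) * (Iki + Iij * Ijk) +
          (1 / (Real.exp uj * rj)) * (Ijk + Iij * Iki)) := by
  have hIij0 : (0:ℝ) < Iij := by linarith
  have hIjk0 : (0:ℝ) < Ijk := by linarith
  have hIki0 : (0:ℝ) < Iki := by linarith
  simp only [NondegT, Nondeg, Lij, Ljk, Lki, elen] at hnd
  simp only [Hijk, hgt, Dik, Dij, dCen, ThI, ThJ, Area, Lij, Ljk, Lki, elen, ang]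
  set a := Real.exp ui * ri with hadef
  set b := Real.exp uj * rj with hbdef
  set c := Real.exp uk * rk with hcdef
  have ha : 0 < a := by positivity
  have hb : 0 < b := by positivity
  have hc : 0 < c := by positivity
  have hxe : 0 ≤ a ^ 2 + b ^ 2 + 2 * Iij * a * b := by positivity
  have hye : 0 ≤ b ^ 2 + c ^ 2 + 2 * Ijk * b * c := by positivity
  have hze : 0 ≤ c ^ 2 + a ^ 2 + 2 * Iki * c * a := by positivity
  set x := Real.sqrt (a ^ 2 + b ^ 2 + 2 * Iij * a * b) with hxdef
  set y := Real.sqrt (b ^ 2 + c ^ 2 + 2 * Ijk * b * c) with hydef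
  set z := Real.sqrt (c ^ 2 + a ^ 2 + 2 * Iki * c * a) with hzdef
  have hx2 : x ^ 2 = a ^ 2 + b ^ 2 + 2 * Iij * a * b := Real.sq_sqrt hxe
  have hy2 : y ^ 2 = b ^ 2 + c ^ 2 + 2 * Ijk * b * c := Real.sq_sqrt hye
  have hz2 : z ^ 2 = c ^ 2 + a ^ 2 + 2 * Iki * c * a := Real.sq_sqrt hze
  have hx : 0 < x := Real.sqrt_pos.mpr (by positivity)
  have hy : 0 < y := Real.sqrt_pos.mpr (by positivity)
  have hz : 0 < z := Real.sqrt_pos.mpr (by positivity)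
  clear_value a b c x y z
  obtain ⟨h1, h2, h3⟩ := hnd
  have hQ : 0 < (y + z - x) * (z + x - y) * (x + y - z) * (x + y + z) := by
    have f1 : 0 < y + z - x := by linarith
    have f2 : 0 < z + x - y := by linarith
    have f3 : 0 < x + y - z := by linarith
    have f4 : 0 < x + y + z := by linarith
    exact mul_pos (mul_pos (mul_pos f1 f2) f3) f4
  set s := Real.sqrt ((y + z - x) * (z + x - y) * (x + y - z) * (x + y + z)) with hsdef
  have hs : 0 < s := Real.sqrt_pos.mpr hQ
  have hs2 : s ^ 2 = (y + z - x) * (z + x - y) * (x + y - z) * (x + y + z) :=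
    Real.sq_sqrt hQ.le
  clear_value s
  -- cosine bounds for θ_i
  have hvI2 : ((x ^ 2 + z ^ 2 - y ^ 2) / (2 * x * z)) ^ 2 < 1 := by
    rw [div_pow, div_lt_one (by positivity)]
    have hid : (2 * x * z) ^ 2 - (x ^ 2 + z ^ 2 - y ^ 2) ^ 2 =
        (y + z - x) * (z + x - y) * (x + y - z) * (x + y + z) := by ring
    linarith [hQ, hid]
  have habs := abs_lt.mp ((sq_lt_one_iff_abs_lt_one (a := (x ^ 2 + z ^ 2 - y ^ 2) / (2 * x * z))).mp hvI2)
  have hvI1 : -1 ≤ (x ^ 2 + z ^ 2 - y ^ 2) / (2 * x * z) := habs.1.le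
  have hvI1' : (x ^ 2 + z ^ 2 - y ^ 2) / (2 * x * z) ≤ 1 := habs.2.le
  have hsq1 : Real.sqrt (1 - ((x ^ 2 + z ^ 2 - y ^ 2) / (2 * x * z)) ^ 2) =
      s / (2 * x * z) := by
    have h : 1 - ((x ^ 2 + z ^ 2 - y ^ 2) / (2 * x * z)) ^ 2 = (s / (2 * x * z)) ^ 2 := by
      rw [div_pow, div_pow, hs2]
      field_simp
      ring
    rw [h, Real.sqrt_sq (by positivity)]
  have hsq2 : Real.sqrt (1 - ((x ^ 2 + y ^ 2 - z ^ 2) / (2 * x * y)) ^ 2) =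
      s / (2 * x * y) := by
    have h : 1 - ((x ^ 2 + y ^ 2 - z ^ 2) / (2 * x * y)) ^ 2 = (s / (2 * x * y)) ^ 2 := by
      rw [div_pow, div_pow, hs2]
      field_simp
      ring
    rw [h, Real.sqrt_sq (by positivity)]
  rw [Real.cos_arccos hvI1 hvI1', Real.sin_arccos, Real.sin_arccos, hsq1, hsq2]
  have key : 2 * x ^ 2 * (a ^ 2 + Iki * a * c) -
      (a ^ 2 + Iij * a * b) * (x ^ 2 + z ^ 2 - y ^ 2) =
      2 * (a ^ 2 * b ^ 2 * (1 - Iij ^ 2) + a * b ^ 2 * c * (Iki + Iij * Ijk) +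
        a ^ 2 * b * c * (Ijk + Iij * Iki)) := by
    rw [hx2, hy2, hz2]; ring
  have e1 : ((a ^ 2 + Iki * a * c) / z -
      (a ^ 2 + Iij * a * b) / x * ((x ^ 2 + z ^ 2 - y ^ 2) / (2 * x * z))) /
      (s / (2 * x * z)) =
      (2 * x ^ 2 * (a ^ 2 + Iki * a * c) -
        (a ^ 2 + Iij * a * b) * (x ^ 2 + z ^ 2 - y ^ 2)) / (x * s) := by
    field_simp
  have e2 : a ^ 2 * b ^ 2 * c ^ 2 / (2 * (1 / 2 * x * y * (s / (2 * x * y))) * x) *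
      (1 / c) * (1 / c * (1 - Iij ^ 2) + 1 / a * (Iki + Iij * Ijk) +
        1 / b * (Ijk + Iij * Iki)) =
      (2 * (a ^ 2 * b ^ 2 * (1 - Iij ^ 2) + a * b ^ 2 * c * (Iki + Iij * Ijk) +
        a ^ 2 * b * c * (Ijk + Iij * Iki))) / (x * s) := by
    field_simp
  rw [e1, e2, key]
end

section
/- At every nondegenerate u ∈ ℝ³ the height h_ij^k at the edge {ij} can be computed from either endpoint of the edge: (d_ik(u) − d_ij(u) cos θ_jk^i(u))/sin θ_jk^i(u) = (d_jk(u) − d_ji(u) cos θ_ki^j(u))/sin θ_ki^j(u). -/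
open Real Filter Topology

/-!
Both heights are divided by a sine; by the law of sines `l_ki sin θ_jk^i = l_jk sin θ_ki^j`,
so after multiplying the two sides by these equal factors the claim reads
`l_ki (d_ik − d_ij cos θ_jk^i) = l_jk (d_jk − d_ji cos θ_ki^j)`. With the law of cosines this is
a polynomial identity in the scaled radii, a consequence of `l² = r² + r'² + 2 I r r'` on the
three edges.
-/

lemma Nondeg.pos {a b c : ℝ} (h : Nondeg a b c) : 0 < a ∧ 0 < b ∧ 0 < c := by
  obtain ⟨h₁, h₂, h₃⟩ := h
  exact ⟨by linarith, by linarith, by linarith⟩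

lemma sq_elen_of_pos {I ra rb x y : ℝ} (h : 0 < elen I ra rb x y) :
    elen I ra rb x y ^ 2 = (exp x * ra) ^ 2 + (exp y * rb) ^ 2 +
      2 * I * (exp x * ra) * (exp y * rb) :=
  sq_sqrt (sqrt_pos.1 h).le

lemma cos_ang {a b c : ℝ} (ha : 0 < a) (hb : 0 < b)
    (h₁ : a ≤ b + c) (h₂ : b ≤ c + a) (h₃ : c ≤ a + b) :
    cos (ang a b c) = (a ^ 2 + b ^ 2 - c ^ 2) / (2 * a * b) := by
  have hab : 0 < 2 * a * b := by positivity
  refine cos_arccos ?_ ?_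
  · rw [le_div_iff₀ hab]; nlinarith
  · rw [div_le_one hab]; nlinarith

lemma mul_sin_ang_eq {a b c : ℝ} (ha : a ≠ 0) (hb : 0 < b) (hc : 0 < c) :
    b * sin (ang a b c) = c * sin (ang a c b) := by
  have heron : ∀ {x y : ℝ}, 0 < x → x * sin (ang a x y) =
      √((4 * a ^ 2 * x ^ 2 - (a ^ 2 + x ^ 2 - y ^ 2) ^ 2) / (4 * a ^ 2)) := by
    intro x y hx
    rw [ang, sin_arccos, ← sqrt_sq hx.le, ← sqrt_mul (sq_nonneg x), sqrt_sq hx.le]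
    congr 1
    field_simp
    ring
  rw [heron hb, heron hc]
  congr 2
  ring

theorem hgt_eq_hgt {ri rj rk Iij Ijk Iki lij ljk lki : ℝ} (hnd : Nondeg lij ljk lki)
    (hij : lij ^ 2 = ri ^ 2 + rj ^ 2 + 2 * Iij * ri * rj)
    (hjk : ljk ^ 2 = rj ^ 2 + rk ^ 2 + 2 * Ijk * rj * rk)
    (hki : lki ^ 2 = rk ^ 2 + ri ^ 2 + 2 * Iki * rk * ri) :
    hgt (dCen Iki ri rk lki) (dCen Iij ri rj lij) (ang lij lki ljk) =
      hgt (dCen Ijk rj rk ljk) (dCen Iij rj ri lij) (ang lij ljk lki) := by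
  obtain ⟨hij_pos, hjk_pos, hki_pos⟩ := hnd.pos
  obtain ⟨h₁, h₂, h₃⟩ := hnd
  have hcos_i := cos_ang (c := ljk) hij_pos hki_pos (by linarith) (by linarith) (by linarith)
  have hcos_j := cos_ang (c := lki) hij_pos hjk_pos (by linarith) (by linarith) (by linarith)
  have key : lki * (dCen Iki ri rk lki - dCen Iij ri rj lij * cos (ang lij lki ljk)) =
      ljk * (dCen Ijk rj rk ljk - dCen Iij rj ri lij * cos (ang lij ljk lki)) := by
    rw [hcos_i, hcos_j, dCen, dCen, dCen, dCen]
    field_simp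
    linear_combination (ri ^ 2 - rj ^ 2 + 2 * Iki * ri * rk - 2 * Ijk * rj * rk) * hij
      - (ri ^ 2 + rj ^ 2 + 2 * Iij * ri * rj) * hki
      + (ri ^ 2 + rj ^ 2 + 2 * Iij * ri * rj) * hjk
  calc hgt (dCen Iki ri rk lki) (dCen Iij ri rj lij) (ang lij lki ljk)
      = lki * (dCen Iki ri rk lki - dCen Iij ri rj lij * cos (ang lij lki ljk)) /
          (lki * sin (ang lij lki ljk)) := (mul_div_mul_left _ _ hki_pos.ne').symm
    _ = ljk * (dCen Ijk rj rk ljk - dCen Iij rj ri lij * cos (ang lij ljk lki)) /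
          (ljk * sin (ang lij ljk lki)) := by
        rw [key, mul_sin_ang_eq hij_pos.ne' hki_pos hjk_pos]
    _ = hgt (dCen Ijk rj rk ljk) (dCen Iij rj ri lij) (ang lij ljk lki) :=
        mul_div_mul_left _ _ hjk_pos.ne'

theorem height_well_defined_general (ri rj rk Iij Ijk Iki : ℝ)
    (ui uj uk : ℝ) (hnd : NondegT ri rj rk Iij Ijk Iki ui uj uk) :
    (Dik ri rj rk Iij Ijk Iki ui uj uk - Dij ri rj rk Iij Ijk Iki ui uj uk * Real.cos (ThI ri rj rk Iij Ijk Iki ui uj uk)) /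
        Real.sin (ThI ri rj rk Iij Ijk Iki ui uj uk) =
      (Djk ri rj rk Iij Ijk Iki ui uj uk - Dji ri rj rk Iij Ijk Iki ui uj uk * Real.cos (ThJ ri rj rk Iij Ijk Iki ui uj uk)) /
        Real.sin (ThJ ri rj rk Iij Ijk Iki ui uj uk) := by
  obtain ⟨hij, hjk, hki⟩ := hnd.pos
  exact hgt_eq_hgt hnd (sq_elen_of_pos hij) (sq_elen_of_pos hjk) (sq_elen_of_pos hki)

/-- The height `h_ij^k` can be computed from either endpoint of the edge `{ij}`. -/
theorem height_well_defined (ri rj rk Iij Ijk Iki : ℝ) (hri : 0 < ri) (hrj : 0 < rj) (hrk : 0 < rk)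
    (hIij : 1 < Iij) (hIjk : 1 < Ijk) (hIki : 1 < Iki)
    (ui uj uk : ℝ) (hnd : NondegT ri rj rk Iij Ijk Iki ui uj uk) :
    (Dik ri rj rk Iij Ijk Iki ui uj uk - Dij ri rj rk Iij Ijk Iki ui uj uk * Real.cos (ThI ri rj rk Iij Ijk Iki ui uj uk)) /
        Real.sin (ThI ri rj rk Iij Ijk Iki ui uj uk) =
      (Djk ri rj rk Iij Ijk Iki ui uj uk - Dji ri rj rk Iij Ijk Iki ui uj uk * Real.cos (ThJ ri rj rk Iij Ijk Iki ui uj uk)) /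
        Real.sin (ThJ ri rj rk Iij Ijk Iki ui uj uk) :=
  height_well_defined_general ri rj rk Iij Ijk Iki ui uj uk hnd
end

section
/- At every nondegenerate u ∈ ℝ³ the power of the vertex j with respect to the face circle is well defined: d_ji(u)^2 + h_ij^k(u)^2 = d_jk(u)^2 + h_jk^i(u)^2. -/
open Real Filter Topology

lemma key (A B C p p' q s' : ℝ) (hA : A ≠ 0) (hB : B ≠ 0) (hC : C ≠ 0)
    (hQ : 2*(A^2*B^2 + B^2*C^2 + C^2*A^2) - A^4 - B^4 - C^4 ≠ 0)
    (hpp : p = A^2 - p') (hq : q = p' + s' - (A^2+B^2-C^2)/2) :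
    (p'/A)^2 + (s'/B - (p/A)*((A^2+B^2-C^2)/(2*A*B)))^2 / (1 - ((A^2+B^2-C^2)/(2*A*B))^2)
    = (q/C)^2 + (p'/A - (q/C)*((A^2+C^2-B^2)/(2*A*C)))^2 / (1 - ((A^2+C^2-B^2)/(2*A*C))^2) := by
  subst hpp hq
  have e1 : 1 - ((A^2+B^2-C^2)/(2*A*B))^2
      = (2*(A^2*B^2 + B^2*C^2 + C^2*A^2) - A^4 - B^4 - C^4)/(4*A^2*B^2) := by
    field_simp; ring
  have e2 : 1 - ((A^2+C^2-B^2)/(2*A*C))^2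
      = (2*(A^2*B^2 + B^2*C^2 + C^2*A^2) - A^4 - B^4 - C^4)/(4*A^2*C^2) := by
    field_simp; ring
  rw [e1, e2, div_div_eq_mul_div, div_div_eq_mul_div]
  generalize hQd : 2*(A^2*B^2 + B^2*C^2 + C^2*A^2) - A^4 - B^4 - C^4 = Q at hQ ⊢
  field_simp
  rw [← hQd]
  ring

set_option maxHeartbeats 1000000 in
/-- The power of the vertex `j` with respect to the face circle is well defined:
`d_ji^2 + (h_ij^k)^2 = d_jk^2 + (h_jk^i)^2`. -/
theorem power_well_defined (ri rj rk Iij Ijk Iki : ℝ) (hri : 0 < ri) (hrj : 0 < rj) (hrk : 0 < rk)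
    (hIij : 1 < Iij) (hIjk : 1 < Ijk) (hIki : 1 < Iki)
    (ui uj uk : ℝ) (hnd : NondegT ri rj rk Iij Ijk Iki ui uj uk) :
    Dji ri rj rk Iij Ijk Iki ui uj uk ^ 2 + Hijk ri rj rk Iij Ijk Iki ui uj uk ^ 2 =
      Djk ri rj rk Iij Ijk Iki ui uj uk ^ 2 + Hjki ri rj rk Iij Ijk Iki ui uj uk ^ 2 := by
  have hRi : (0:ℝ) < (Real.exp ui * ri) := mul_pos (Real.exp_pos ui) hri
  have hRj : (0:ℝ) < (Real.exp uj * rj) := mul_pos (Real.exp_pos uj) hrj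
  have hRk : (0:ℝ) < (Real.exp uk * rk) := mul_pos (Real.exp_pos uk) hrk
  have hSA : (0:ℝ) < (Real.exp ui * ri)^2 + (Real.exp uj * rj)^2 + 2*Iij*(Real.exp ui * ri)*(Real.exp uj * rj) := by
    nlinarith [mul_pos hRi hRj, sq_nonneg ((Real.exp ui * ri)), sq_nonneg ((Real.exp uj * rj))]
  have hSB : (0:ℝ) < (Real.exp uk * rk)^2 + (Real.exp ui * ri)^2 + 2*Iki*(Real.exp uk * rk)*(Real.exp ui * ri) := by
    nlinarith [mul_pos hRk hRi, sq_nonneg ((Real.exp uk * rk)), sq_nonneg ((Real.exp ui * ri))]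
  have hSC : (0:ℝ) < (Real.exp uj * rj)^2 + (Real.exp uk * rk)^2 + 2*Ijk*(Real.exp uj * rj)*(Real.exp uk * rk) := by
    nlinarith [mul_pos hRj hRk, sq_nonneg ((Real.exp uj * rj)), sq_nonneg ((Real.exp uk * rk))]
  have hA2 : (Lij ri rj rk Iij Ijk Iki ui uj uk)^2 = (Real.exp ui * ri)^2 + (Real.exp uj * rj)^2 + 2*Iij*(Real.exp ui * ri)*(Real.exp uj * rj) := by
    rw [Lij, elen]; exact Real.sq_sqrt hSA.le
  have hB2 : (Lki ri rj rk Iij Ijk Iki ui uj uk)^2 = (Real.exp uk * rk)^2 + (Real.exp ui * ri)^2 + 2*Iki*(Real.exp uk * rk)*(Real.exp ui * ri) := by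
    rw [Lki, elen]; exact Real.sq_sqrt hSB.le
  have hC2 : (Ljk ri rj rk Iij Ijk Iki ui uj uk)^2 = (Real.exp uj * rj)^2 + (Real.exp uk * rk)^2 + 2*Ijk*(Real.exp uj * rj)*(Real.exp uk * rk) := by
    rw [Ljk, elen]; exact Real.sq_sqrt hSC.le
  have hApos : (0:ℝ) < (Lij ri rj rk Iij Ijk Iki ui uj uk) := by rw [Lij, elen]; exact Real.sqrt_pos.mpr hSA
  have hBpos : (0:ℝ) < (Lki ri rj rk Iij Ijk Iki ui uj uk) := by rw [Lki, elen]; exact Real.sqrt_pos.mpr hSB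
  have hCpos : (0:ℝ) < (Ljk ri rj rk Iij Ijk Iki ui uj uk) := by rw [Ljk, elen]; exact Real.sqrt_pos.mpr hSC
  obtain ⟨hn1, hn2, hn3⟩ := hnd
  -- hn1 : A < C + B, hn2 : C < B + A, hn3 : B < A + C
  have h2AB : (0:ℝ) < 2 * (Lij ri rj rk Iij Ijk Iki ui uj uk) * (Lki ri rj rk Iij Ijk Iki ui uj uk) := by positivity
  have h2AC : (0:ℝ) < 2 * (Lij ri rj rk Iij Ijk Iki ui uj uk) * (Ljk ri rj rk Iij Ijk Iki ui uj uk) := by positivity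
  have hprod : (0:ℝ) < ((Lij ri rj rk Iij Ijk Iki ui uj uk) + (Lki ri rj rk Iij Ijk Iki ui uj uk) + (Ljk ri rj rk Iij Ijk Iki ui uj uk)) * (-(Lij ri rj rk Iij Ijk Iki ui uj uk) + (Lki ri rj rk Iij Ijk Iki ui uj uk) + (Ljk ri rj rk Iij Ijk Iki ui uj uk)) * ((Lij ri rj rk Iij Ijk Iki ui uj uk) - (Lki ri rj rk Iij Ijk Iki ui uj uk) + (Ljk ri rj rk Iij Ijk Iki ui uj uk)) * ((Lij ri rj rk Iij Ijk Iki ui uj uk) + (Lki ri rj rk Iij Ijk Iki ui uj uk) - (Ljk ri rj rk Iij Ijk Iki ui uj uk)) := by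
    apply mul_pos (mul_pos (mul_pos (by linarith) (by linarith)) (by linarith)) (by linarith)
  have ht1l : -1 < (((Lij ri rj rk Iij Ijk Iki ui uj uk)^2 + (Lki ri rj rk Iij Ijk Iki ui uj uk)^2 - (Ljk ri rj rk Iij Ijk Iki ui uj uk)^2)/(2*(Lij ri rj rk Iij Ijk Iki ui uj uk)*(Lki ri rj rk Iij Ijk Iki ui uj uk))) := by
    rw [lt_div_iff₀ h2AB]; nlinarith [mul_pos (show (0:ℝ) < (Lij ri rj rk Iij Ijk Iki ui uj uk) + (Lki ri rj rk Iij Ijk Iki ui uj uk) - (Ljk ri rj rk Iij Ijk Iki ui uj uk) by linarith) (show (0:ℝ) < (Lij ri rj rk Iij Ijk Iki ui uj uk) + (Lki ri rj rk Iij Ijk Iki ui uj uk) + (Ljk ri rj rk Iij Ijk Iki ui uj uk) by linarith)]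
  have ht1u : (((Lij ri rj rk Iij Ijk Iki ui uj uk)^2 + (Lki ri rj rk Iij Ijk Iki ui uj uk)^2 - (Ljk ri rj rk Iij Ijk Iki ui uj uk)^2)/(2*(Lij ri rj rk Iij Ijk Iki ui uj uk)*(Lki ri rj rk Iij Ijk Iki ui uj uk))) < 1 := by
    rw [div_lt_one h2AB]; nlinarith [mul_pos (show (0:ℝ) < (Ljk ri rj rk Iij Ijk Iki ui uj uk) + (Lki ri rj rk Iij Ijk Iki ui uj uk) - (Lij ri rj rk Iij Ijk Iki ui uj uk) by linarith) (show (0:ℝ) < (Lij ri rj rk Iij Ijk Iki ui uj uk) + (Ljk ri rj rk Iij Ijk Iki ui uj uk) - (Lki ri rj rk Iij Ijk Iki ui uj uk) by linarith)]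
  have ht2l : -1 < (((Lij ri rj rk Iij Ijk Iki ui uj uk)^2 + (Ljk ri rj rk Iij Ijk Iki ui uj uk)^2 - (Lki ri rj rk Iij Ijk Iki ui uj uk)^2)/(2*(Lij ri rj rk Iij Ijk Iki ui uj uk)*(Ljk ri rj rk Iij Ijk Iki ui uj uk))) := by
    rw [lt_div_iff₀ h2AC]; nlinarith [mul_pos (show (0:ℝ) < (Lij ri rj rk Iij Ijk Iki ui uj uk) + (Ljk ri rj rk Iij Ijk Iki ui uj uk) - (Lki ri rj rk Iij Ijk Iki ui uj uk) by linarith) (show (0:ℝ) < (Lij ri rj rk Iij Ijk Iki ui uj uk) + (Ljk ri rj rk Iij Ijk Iki ui uj uk) + (Lki ri rj rk Iij Ijk Iki ui uj uk) by linarith)]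
  have ht2u : (((Lij ri rj rk Iij Ijk Iki ui uj uk)^2 + (Ljk ri rj rk Iij Ijk Iki ui uj uk)^2 - (Lki ri rj rk Iij Ijk Iki ui uj uk)^2)/(2*(Lij ri rj rk Iij Ijk Iki ui uj uk)*(Ljk ri rj rk Iij Ijk Iki ui uj uk))) < 1 := by
    rw [div_lt_one h2AC]; nlinarith [mul_pos (show (0:ℝ) < (Lki ri rj rk Iij Ijk Iki ui uj uk) + (Ljk ri rj rk Iij Ijk Iki ui uj uk) - (Lij ri rj rk Iij Ijk Iki ui uj uk) by linarith) (show (0:ℝ) < (Lij ri rj rk Iij Ijk Iki ui uj uk) + (Lki ri rj rk Iij Ijk Iki ui uj uk) - (Ljk ri rj rk Iij Ijk Iki ui uj uk) by linarith)]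
  have h1pos : (0:ℝ) < 1 - (((Lij ri rj rk Iij Ijk Iki ui uj uk)^2 + (Lki ri rj rk Iij Ijk Iki ui uj uk)^2 - (Ljk ri rj rk Iij Ijk Iki ui uj uk)^2)/(2*(Lij ri rj rk Iij Ijk Iki ui uj uk)*(Lki ri rj rk Iij Ijk Iki ui uj uk)))^2 := by nlinarith [ht1l, ht1u]
  have h2pos : (0:ℝ) < 1 - (((Lij ri rj rk Iij Ijk Iki ui uj uk)^2 + (Ljk ri rj rk Iij Ijk Iki ui uj uk)^2 - (Lki ri rj rk Iij Ijk Iki ui uj uk)^2)/(2*(Lij ri rj rk Iij Ijk Iki ui uj uk)*(Ljk ri rj rk Iij Ijk Iki ui uj uk)))^2 := by nlinarith [ht2l, ht2u]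
  have hcos1 : Real.cos (ThI ri rj rk Iij Ijk Iki ui uj uk) = (((Lij ri rj rk Iij Ijk Iki ui uj uk)^2 + (Lki ri rj rk Iij Ijk Iki ui uj uk)^2 - (Ljk ri rj rk Iij Ijk Iki ui uj uk)^2)/(2*(Lij ri rj rk Iij Ijk Iki ui uj uk)*(Lki ri rj rk Iij Ijk Iki ui uj uk))) := by
    rw [ThI, ang]; exact Real.cos_arccos ht1l.le ht1u.le
  have hcos2 : Real.cos (ThJ ri rj rk Iij Ijk Iki ui uj uk) = (((Lij ri rj rk Iij Ijk Iki ui uj uk)^2 + (Ljk ri rj rk Iij Ijk Iki ui uj uk)^2 - (Lki ri rj rk Iij Ijk Iki ui uj uk)^2)/(2*(Lij ri rj rk Iij Ijk Iki ui uj uk)*(Ljk ri rj rk Iij Ijk Iki ui uj uk))) := by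
    rw [ThJ, ang]; exact Real.cos_arccos ht2l.le ht2u.le
  have hsin1 : Real.sin (ThI ri rj rk Iij Ijk Iki ui uj uk) = Real.sqrt (1 - (((Lij ri rj rk Iij Ijk Iki ui uj uk)^2 + (Lki ri rj rk Iij Ijk Iki ui uj uk)^2 - (Ljk ri rj rk Iij Ijk Iki ui uj uk)^2)/(2*(Lij ri rj rk Iij Ijk Iki ui uj uk)*(Lki ri rj rk Iij Ijk Iki ui uj uk)))^2) := by
    rw [ThI, ang, Real.sin_arccos]
  have hsin2 : Real.sin (ThJ ri rj rk Iij Ijk Iki ui uj uk) = Real.sqrt (1 - (((Lij ri rj rk Iij Ijk Iki ui uj uk)^2 + (Ljk ri rj rk Iij Ijk Iki ui uj uk)^2 - (Lki ri rj rk Iij Ijk Iki ui uj uk)^2)/(2*(Lij ri rj rk Iij Ijk Iki ui uj uk)*(Ljk ri rj rk Iij Ijk Iki ui uj uk)))^2) := by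
    rw [ThJ, ang, Real.sin_arccos]
  have hH1 : Hijk ri rj rk Iij Ijk Iki ui uj uk ^ 2 =
      (Dik ri rj rk Iij Ijk Iki ui uj uk - Dij ri rj rk Iij Ijk Iki ui uj uk * (((Lij ri rj rk Iij Ijk Iki ui uj uk)^2 + (Lki ri rj rk Iij Ijk Iki ui uj uk)^2 - (Ljk ri rj rk Iij Ijk Iki ui uj uk)^2)/(2*(Lij ri rj rk Iij Ijk Iki ui uj uk)*(Lki ri rj rk Iij Ijk Iki ui uj uk))))^2 / (1 - (((Lij ri rj rk Iij Ijk Iki ui uj uk)^2 + (Lki ri rj rk Iij Ijk Iki ui uj uk)^2 - (Ljk ri rj rk Iij Ijk Iki ui uj uk)^2)/(2*(Lij ri rj rk Iij Ijk Iki ui uj uk)*(Lki ri rj rk Iij Ijk Iki ui uj uk)))^2) := by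
    rw [Hijk, hgt, hcos1, hsin1, div_pow, Real.sq_sqrt h1pos.le]
  have hH2 : Hjki ri rj rk Iij Ijk Iki ui uj uk ^ 2 =
      (Dji ri rj rk Iij Ijk Iki ui uj uk - Djk ri rj rk Iij Ijk Iki ui uj uk * (((Lij ri rj rk Iij Ijk Iki ui uj uk)^2 + (Ljk ri rj rk Iij Ijk Iki ui uj uk)^2 - (Lki ri rj rk Iij Ijk Iki ui uj uk)^2)/(2*(Lij ri rj rk Iij Ijk Iki ui uj uk)*(Ljk ri rj rk Iij Ijk Iki ui uj uk))))^2 / (1 - (((Lij ri rj rk Iij Ijk Iki ui uj uk)^2 + (Ljk ri rj rk Iij Ijk Iki ui uj uk)^2 - (Lki ri rj rk Iij Ijk Iki ui uj uk)^2)/(2*(Lij ri rj rk Iij Ijk Iki ui uj uk)*(Ljk ri rj rk Iij Ijk Iki ui uj uk)))^2) := by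
    rw [Hjki, hgt, hcos2, hsin2, div_pow, Real.sq_sqrt h2pos.le]
  rw [hH1, hH2]
  simp only [Dji, Djk, Dik, Dij, dCen]
  have hQ : (0:ℝ) < 2*((Lij ri rj rk Iij Ijk Iki ui uj uk)^2*(Lki ri rj rk Iij Ijk Iki ui uj uk)^2 + (Lki ri rj rk Iij Ijk Iki ui uj uk)^2*(Ljk ri rj rk Iij Ijk Iki ui uj uk)^2 + (Ljk ri rj rk Iij Ijk Iki ui uj uk)^2*(Lij ri rj rk Iij Ijk Iki ui uj uk)^2) - (Lij ri rj rk Iij Ijk Iki ui uj uk)^4 - (Lki ri rj rk Iij Ijk Iki ui uj uk)^4 - (Ljk ri rj rk Iij Ijk Iki ui uj uk)^4 := by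
    nlinarith [hprod]
  have hpp : (Real.exp ui * ri)^2 + Iij*(Real.exp ui * ri)*(Real.exp uj * rj) = (Lij ri rj rk Iij Ijk Iki ui uj uk)^2 - ((Real.exp uj * rj)^2 + Iij*(Real.exp uj * rj)*(Real.exp ui * ri)) := by rw [hA2]; ring
  have hq : (Real.exp uj * rj)^2 + Ijk*(Real.exp uj * rj)*(Real.exp uk * rk) = ((Real.exp uj * rj)^2 + Iij*(Real.exp uj * rj)*(Real.exp ui * ri)) + ((Real.exp ui * ri)^2 + Iki*(Real.exp ui * ri)*(Real.exp uk * rk)) - ((Lij ri rj rk Iij Ijk Iki ui uj uk)^2 + (Lki ri rj rk Iij Ijk Iki ui uj uk)^2 - (Ljk ri rj rk Iij Ijk Iki ui uj uk)^2)/2 := by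
    rw [hA2, hB2, hC2]; ring
  exact key (Lij ri rj rk Iij Ijk Iki ui uj uk) (Lki ri rj rk Iij Ijk Iki ui uj uk) (Ljk ri rj rk Iij Ijk Iki ui uj uk) ((Real.exp ui * ri)^2 + Iij*(Real.exp ui * ri)*(Real.exp uj * rj)) ((Real.exp uj * rj)^2 + Iij*(Real.exp uj * rj)*(Real.exp ui * ri)) ((Real.exp uj * rj)^2 + Ijk*(Real.exp uj * rj)*(Real.exp uk * rk))
    ((Real.exp ui * ri)^2 + Iki*(Real.exp ui * ri)*(Real.exp uk * rk)) hApos.ne' hBpos.ne' hCpos.ne' hQ.ne' hpp hq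
end

section
/- There is no sequence (u_n) in ℝ³ such that u_{i,n} → +∞, u_{j,n} → +∞, u_{k,n} ≤ C for all n (for some constant C), and the triangle inequality l_ij(u_n) ≤ l_jk(u_n) + l_ki(u_n) holds for every n. Equivalently, for any sequence with u_{i,n} → +∞, u_{j,n} → +∞ and u_{k,n} bounded above, there exists n with l_ij(u_n) > l_jk(u_n) + l_ki(u_n). -/
open Real Filter Topology

lemma elen_le' (I ra rb x y T : ℝ) (hT : 0 ≤ T)
    (h : (Real.exp x * ra) ^ 2 + (Real.exp y * rb) ^ 2 +
      2 * I * (Real.exp x * ra) * (Real.exp y * rb) ≤ T ^ 2) :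
    elen I ra rb x y ≤ T := by
  rw [elen]
  calc Real.sqrt _ ≤ Real.sqrt (T ^ 2) := Real.sqrt_le_sqrt h
  _ = T := by rw [Real.sqrt_sq hT]

lemma elen_lt' (I ra rb x y T : ℝ) (hT : 0 ≤ T)
    (h : T ^ 2 < (Real.exp x * ra) ^ 2 + (Real.exp y * rb) ^ 2 +
      2 * I * (Real.exp x * ra) * (Real.exp y * rb)) :
    T < elen I ra rb x y := by
  rw [elen]
  exact (Real.lt_sqrt hT).mpr h

lemma elen_up (I ra rb x y : ℝ) (hra : 0 < ra) (hrb : 0 < rb) (hI : 1 < I) :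
    elen I ra rb x y ≤ Real.exp x * ra + (I + 1) * (Real.exp y * rb) := by
  have h1 : 0 < Real.exp x * ra := by positivity
  have h2 : 0 < Real.exp y * rb := by positivity
  apply elen_le' _ _ _ _ _ _ (by positivity)
  nlinarith [mul_pos h1 h2,
    mul_nonneg (mul_nonneg (by linarith : (0:ℝ) ≤ I) (by linarith : (0:ℝ) ≤ I + 2))
      (sq_nonneg (Real.exp y * rb))]

lemma elen_up' (I ra rb x y : ℝ) (hra : 0 < ra) (hrb : 0 < rb) (hI : 1 < I) :
    elen I ra rb x y ≤ (I + 1) * (Real.exp x * ra) + Real.exp y * rb := by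
  have h1 : 0 < Real.exp x * ra := by positivity
  have h2 : 0 < Real.exp y * rb := by positivity
  apply elen_le' _ _ _ _ _ _ (by positivity)
  nlinarith [mul_pos h1 h2,
    mul_nonneg (mul_nonneg (by linarith : (0:ℝ) ≤ I) (by linarith : (0:ℝ) ≤ I + 2))
      (sq_nonneg (Real.exp x * ra))]

lemma key_arith (eps K z0 M X Y Z : ℝ) (heps : 0 < eps) (hK0 : 0 < K) (hz00 : 0 < z0)
    (hM1 : 1 ≤ M) (hMeps : 2*K*z0 + K^2*z0^2 + 1 ≤ eps * M)
    (hX0 : 0 < X) (hY0 : 0 < Y) (hZ0 : 0 < Z)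
    (hXM : M ≤ X) (hYM : M ≤ Y) (hZz0 : Z ≤ z0) :
    (X + Y + K*Z)^2 < X^2 + Y^2 + 2*(1+eps)*X*Y := by
  have h1 : eps * M * X ≤ eps * (Y * X) := by
    have := mul_le_mul_of_nonneg_right (mul_le_mul_of_nonneg_left hYM heps.le) hX0.le
    linarith [this.trans_eq (by ring : eps * Y * X = eps * (Y * X))]
  have h2 : eps * M * Y ≤ eps * (X * Y) := by
    have := mul_le_mul_of_nonneg_right (mul_le_mul_of_nonneg_left hXM heps.le) hY0.le
    linarith [this.trans_eq (by ring : eps * X * Y = eps * (X * Y))]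
  have h3 : (2*K*z0 + K^2*z0^2 + 1) * X ≤ eps * M * X :=
    mul_le_mul_of_nonneg_right hMeps hX0.le
  have h4 : (2*K*z0 + K^2*z0^2 + 1) * Y ≤ eps * M * Y :=
    mul_le_mul_of_nonneg_right hMeps hY0.le
  have h5 : K*Z*(X+Y) ≤ K*z0*(X+Y) :=
    mul_le_mul_of_nonneg_right (mul_le_mul_of_nonneg_left hZz0 hK0.le) (by positivity)
  have h6 : (K*Z)^2 ≤ (K*z0)^2 :=
    pow_le_pow_left₀ (by positivity) (mul_le_mul_of_nonneg_left hZz0 hK0.le) 2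
  have h7 : (1:ℝ) ≤ X + Y := by linarith
  have h8 : 0 ≤ (K^2*z0^2 + 1) * (X + Y - 1) := mul_nonneg (by positivity) (by linarith)
  have hA : 2*(K*Z)*(X+Y) + (K*Z)^2 ≤ 2*(K*z0)*(X+Y) + (K*z0)^2 := by linarith
  have hB : 2*(K*z0)*(X+Y) + (K*z0)^2 < 2*eps*(X*Y) := by linarith
  nlinarith [hA, hB]

/-- If `u_i, u_j → +∞` and `u_k` is bounded above, the triangle inequality
`l_ij ≤ l_jk + l_ki` must eventually fail. -/
theorem no_degenerate_sequence (ri rj rk Iij Ijk Iki : ℝ) (hri : 0 < ri) (hrj : 0 < rj) (hrk : 0 < rk)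
    (hIij : 1 < Iij) (hIjk : 1 < Ijk) (hIki : 1 < Iki)
    (a b c : ℕ → ℝ) (C : ℝ)
    (ha : Tendsto a atTop atTop) (hb : Tendsto b atTop atTop)
    (hc : ∀ n, c n ≤ C) :
    ∃ n, Ljk ri rj rk Iij Ijk Iki (a n) (b n) (c n) + Lki ri rj rk Iij Ijk Iki (a n) (b n) (c n) <
      Lij ri rj rk Iij Ijk Iki (a n) (b n) (c n) := by
  have heps : (0:ℝ) < Iij - 1 := by linarith
  have hK0 : (0:ℝ) < Ijk + Iki + 2 := by linarith
  have hz00 : 0 < Real.exp C * rk := by positivity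
  obtain ⟨M, hM1, hMeps⟩ : ∃ M, 1 ≤ M ∧
      2*(Ijk + Iki + 2)*(Real.exp C * rk) + (Ijk + Iki + 2)^2*(Real.exp C * rk)^2 + 1
        ≤ (Iij - 1) * M := by
    refine ⟨max 1 ((2*(Ijk + Iki + 2)*(Real.exp C * rk) +
      (Ijk + Iki + 2)^2*(Real.exp C * rk)^2 + 1)/(Iij - 1)), le_max_left _ _, ?_⟩
    have h := le_max_right 1 ((2*(Ijk + Iki + 2)*(Real.exp C * rk) +
      (Ijk + Iki + 2)^2*(Real.exp C * rk)^2 + 1)/(Iij - 1))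
    rw [div_le_iff₀ heps] at h
    linarith [h]
  have hM0 : (0:ℝ) < M := by linarith
  obtain ⟨n, han, hbn⟩ : ∃ n, Real.log (M/ri) ≤ a n ∧ Real.log (M/rj) ≤ b n :=
    ((ha.eventually_ge_atTop (Real.log (M/ri))).and
      (hb.eventually_ge_atTop (Real.log (M/rj)))).exists
  refine ⟨n, ?_⟩
  have hX0 : 0 < Real.exp (a n) * ri := by positivity
  have hY0 : 0 < Real.exp (b n) * rj := by positivity
  have hZ0 : 0 < Real.exp (c n) * rk := by positivity
  have hXM : M ≤ Real.exp (a n) * ri := by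
    have h1 : M / ri ≤ Real.exp (a n) := by
      calc M/ri = Real.exp (Real.log (M/ri)) := (Real.exp_log (by positivity)).symm
      _ ≤ Real.exp (a n) := Real.exp_le_exp.mpr han
    calc M = (M/ri) * ri := by field_simp
    _ ≤ Real.exp (a n) * ri := mul_le_mul_of_nonneg_right h1 hri.le
  have hYM : M ≤ Real.exp (b n) * rj := by
    have h1 : M / rj ≤ Real.exp (b n) := by
      calc M/rj = Real.exp (Real.log (M/rj)) := (Real.exp_log (by positivity)).symm
      _ ≤ Real.exp (b n) := Real.exp_le_exp.mpr hbn
    calc M = (M/rj) * rj := by field_simp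
    _ ≤ Real.exp (b n) * rj := mul_le_mul_of_nonneg_right h1 hrj.le
  have hZz0 : Real.exp (c n) * rk ≤ Real.exp C * rk :=
    mul_le_mul_of_nonneg_right (Real.exp_le_exp.mpr (hc n)) hrk.le
  have hLjk : Ljk ri rj rk Iij Ijk Iki (a n) (b n) (c n) ≤
      Real.exp (b n) * rj + (Ijk + 1) * (Real.exp (c n) * rk) :=
    elen_up Ijk rj rk (b n) (c n) hrj hrk hIjk
  have hLki : Lki ri rj rk Iij Ijk Iki (a n) (b n) (c n) ≤
      (Iki + 1) * (Real.exp (c n) * rk) + Real.exp (a n) * ri :=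
    elen_up' Iki rk ri (c n) (a n) hrk hri hIki
  have hkey := key_arith (Iij - 1) (Ijk + Iki + 2) (Real.exp C * rk) M
    (Real.exp (a n) * ri) (Real.exp (b n) * rj) (Real.exp (c n) * rk)
    heps hK0 hz00 hM1 hMeps hX0 hY0 hZ0 hXM hYM hZz0
  have hLij : Real.exp (a n) * ri + Real.exp (b n) * rj +
      (Ijk + Iki + 2) * (Real.exp (c n) * rk) < Lij ri rj rk Iij Ijk Iki (a n) (b n) (c n) := by
    apply elen_lt' _ _ _ _ _ _ (by positivity)
    have heq : 2*(1+(Iij-1))*(Real.exp (a n) * ri)*(Real.exp (b n) * rj) =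
        2 * Iij * (Real.exp (a n) * ri) * (Real.exp (b n) * rj) := by ring
    nlinarith [hkey]
  linarith [hLjk, hLki, hLij]
end

section
/- Let (u_n) be a sequence in ℝ³ such that every u_n is nondegenerate, u_{i,n} → +∞, and the sequences (u_{j,n}) and (u_{k,n}) converge. Then the inner angle at i tends to zero: θ_jk^i(u_n) → 0. -/
open Real Filter Topology

set_option maxHeartbeats 1000000 in
/-- If `u_i → +∞` and `u_j, u_k` converge, the inner angle at `i` tends to zero. -/
theorem angle_at_i_tendsto_zero (ri rj rk Iij Ijk Iki : ℝ) (hri : 0 < ri) (hrj : 0 < rj) (hrk : 0 < rk)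
    (hIij : 1 < Iij) (hIjk : 1 < Ijk) (hIki : 1 < Iki)
    (a b c : ℕ → ℝ) (aj ak : ℝ)
    (hnd : ∀ n, NondegT ri rj rk Iij Ijk Iki (a n) (b n) (c n))
    (ha : Tendsto a atTop atTop) (hb : Tendsto b atTop (𝓝 aj))
    (hc : Tendsto c atTop (𝓝 ak)) :
    Tendsto (fun n => ThI ri rj rk Iij Ijk Iki (a n) (b n) (c n)) atTop (𝓝 0) := by
  unfold ThI ang
  -- notation
  have hIij0 : (0:ℝ) < Iij := lt_trans one_pos hIij
  have hIjk0 : (0:ℝ) < Ijk := lt_trans one_pos hIjk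
  have hIki0 : (0:ℝ) < Iki := lt_trans one_pos hIki
  set L1 : ℕ → ℝ := fun n => Lij ri rj rk Iij Ijk Iki (a n) (b n) (c n) with hL1
  set L2 : ℕ → ℝ := fun n => Ljk ri rj rk Iij Ijk Iki (a n) (b n) (c n) with hL2
  set L3 : ℕ → ℝ := fun n => Lki ri rj rk Iij Ijk Iki (a n) (b n) (c n) with hL3
  set t : ℕ → ℝ := fun n => Real.exp (a n) with ht
  have htpos : ∀ n, 0 < t n := fun n => Real.exp_pos _
  -- ε = exp(b-a) → 0, δ = exp(c-a) → 0
  have hba : Tendsto (fun n => Real.exp (b n - a n)) atTop (𝓝 0) := by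
    apply Real.tendsto_exp_atBot.comp
    have : Tendsto (fun n => -(a n)) atTop atBot := tendsto_neg_atTop_atBot.comp ha
    simpa [sub_eq_add_neg] using hb.add_atBot this
  have hca : Tendsto (fun n => Real.exp (c n - a n)) atTop (𝓝 0) := by
    apply Real.tendsto_exp_atBot.comp
    have : Tendsto (fun n => -(a n)) atTop atBot := tendsto_neg_atTop_atBot.comp ha
    simpa [sub_eq_add_neg] using hc.add_atBot this
  -- squared lengths divided by t²
  have hL1sq : ∀ n, (L1 n)^2 / (t n)^2
      = ri^2 + (Real.exp (b n - a n) * rj)^2 + 2*Iij*ri*(Real.exp (b n - a n)*rj) := by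
    intro n
    have h1 : (L1 n)^2 = (Real.exp (a n) * ri)^2 + (Real.exp (b n) * rj)^2
        + 2*Iij*(Real.exp (a n) * ri)*(Real.exp (b n) * rj) := by
      rw [hL1]; unfold Lij elen
      exact Real.sq_sqrt (by positivity)
    rw [h1, ht]
    have hexp : Real.exp (b n - a n) = Real.exp (b n) / Real.exp (a n) := Real.exp_sub _ _
    rw [hexp]
    field_simp
  have hL3sq : ∀ n, (L3 n)^2 / (t n)^2
      = ri^2 + (Real.exp (c n - a n) * rk)^2 + 2*Iki*(Real.exp (c n - a n)*rk)*ri := by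
    intro n
    have h1 : (L3 n)^2 = (Real.exp (c n) * rk)^2 + (Real.exp (a n) * ri)^2
        + 2*Iki*(Real.exp (c n) * rk)*(Real.exp (a n) * ri) := by
      rw [hL3]; unfold Lki elen
      exact Real.sq_sqrt (by positivity)
    rw [h1, ht]
    have hexp : Real.exp (c n - a n) = Real.exp (c n) / Real.exp (a n) := Real.exp_sub _ _
    rw [hexp]
    field_simp
    ring
  -- limits of squared normalized lengths
  have hL1sq_lim : Tendsto (fun n => (L1 n)^2 / (t n)^2) atTop (𝓝 (ri^2)) := by
    simp only [hL1sq]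
    have : Tendsto (fun n => ri^2 + (Real.exp (b n - a n) * rj)^2
        + 2*Iij*ri*(Real.exp (b n - a n)*rj)) atTop (𝓝 (ri^2 + (0*rj)^2 + 2*Iij*ri*(0*rj))) := by
      exact (((tendsto_const_nhds.add (((hba.mul_const rj).pow 2)))).add
        ((tendsto_const_nhds.mul (hba.mul_const rj))))
    simpa using this
  have hL3sq_lim : Tendsto (fun n => (L3 n)^2 / (t n)^2) atTop (𝓝 (ri^2)) := by
    simp only [hL3sq]
    have : Tendsto (fun n => ri^2 + (Real.exp (c n - a n) * rk)^2
        + 2*Iki*(Real.exp (c n - a n)*rk)*ri) atTop (𝓝 (ri^2 + (0*rk)^2 + 2*Iki*(0*rk)*ri)) := by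
      exact ((tendsto_const_nhds.add ((hca.mul_const rk).pow 2)).add
        (((tendsto_const_nhds.mul (hca.mul_const rk)).mul_const ri)))
    simpa using this
  have hL2sq_lim : Tendsto (fun n => (L2 n)^2 / (t n)^2) atTop (𝓝 0) := by
    have hcont : Continuous fun p : ℝ × ℝ => (elen Ijk rj rk p.1 p.2)^2 := by
        unfold elen
        exact (Real.continuous_sqrt.comp (by continuity)).pow 2
    have hnum : Tendsto (fun n => (L2 n)^2) atTop (𝓝 ((elen Ijk rj rk aj ak)^2)) := by
      have h2 : Tendsto (fun n => (b n, c n)) atTop (𝓝 (aj, ak)) := hb.prodMk_nhds hc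
      have h3 := hcont.continuousAt.tendsto.comp h2
      simp only [hL2]; unfold Ljk
      exact h3
    have hden : Tendsto (fun n => (t n)^2) atTop atTop :=
      (tendsto_pow_atTop (by norm_num : (2:ℕ) ≠ 0)).comp (Real.tendsto_exp_atTop.comp ha)
    exact hnum.div_atTop hden
  -- normalized lengths
  have hL1nn : ∀ n, 0 ≤ L1 n := fun n => Real.sqrt_nonneg _
  have hL3nn : ∀ n, 0 ≤ L3 n := fun n => Real.sqrt_nonneg _
  have hL1pos : ∀ n, 0 < L1 n := by
    intro n; rw [hL1]; unfold Lij elen; exact Real.sqrt_pos.mpr (by positivity)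
  have hL3pos : ∀ n, 0 < L3 n := by
    intro n; rw [hL3]; unfold Lki elen; exact Real.sqrt_pos.mpr (by positivity)
  have hL1div : ∀ n, L1 n / t n = Real.sqrt ((L1 n)^2 / (t n)^2) := by
    intro n
    rw [Real.sqrt_div (sq_nonneg _), Real.sqrt_sq (hL1nn n), Real.sqrt_sq (htpos n).le]
  have hL3div : ∀ n, L3 n / t n = Real.sqrt ((L3 n)^2 / (t n)^2) := by
    intro n
    rw [Real.sqrt_div (sq_nonneg _), Real.sqrt_sq (hL3nn n), Real.sqrt_sq (htpos n).le]
  have hL1lim : Tendsto (fun n => L1 n / t n) atTop (𝓝 ri) := by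
    simp only [hL1div]
    have := (Real.continuous_sqrt.continuousAt (x := ri^2)).tendsto.comp hL1sq_lim
    simpa [Real.sqrt_sq hri.le, Function.comp_def] using this
  have hL3lim : Tendsto (fun n => L3 n / t n) atTop (𝓝 ri) := by
    simp only [hL3div]
    have := (Real.continuous_sqrt.continuousAt (x := ri^2)).tendsto.comp hL3sq_lim
    simpa [Real.sqrt_sq hri.le, Function.comp_def] using this
  -- the cosine ratio
  have hF : ∀ n, ((L1 n)^2 + (L3 n)^2 - (L2 n)^2) / (2 * L1 n * L3 n)
      = ((L1 n)^2/(t n)^2 + (L3 n)^2/(t n)^2 - (L2 n)^2/(t n)^2)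
        / (2 * (L1 n / t n) * (L3 n / t n)) := by
    intro n
    rw [div_eq_div_iff (mul_pos (mul_pos two_pos (hL1pos n)) (hL3pos n)).ne'
      (mul_pos (mul_pos two_pos (div_pos (hL1pos n) (htpos n)))
        (div_pos (hL3pos n) (htpos n))).ne']
    field_simp
  have hFlim : Tendsto (fun n => ((L1 n)^2 + (L3 n)^2 - (L2 n)^2) / (2 * L1 n * L3 n))
      atTop (𝓝 1) := by
    simp only [hF]
    have hnum : Tendsto (fun n => (L1 n)^2/(t n)^2 + (L3 n)^2/(t n)^2 - (L2 n)^2/(t n)^2)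
        atTop (𝓝 (ri^2 + ri^2 - 0)) := (hL1sq_lim.add hL3sq_lim).sub hL2sq_lim
    have hden : Tendsto (fun n => 2 * (L1 n / t n) * (L3 n / t n)) atTop (𝓝 (2 * ri * ri)) :=
      (tendsto_const_nhds.mul hL1lim).mul hL3lim
    have := hnum.div hden (by positivity)
    have heq : (ri^2 + ri^2 - 0) / (2 * ri * ri) = 1 := by
      field_simp; ring
    rwa [heq] at this
  -- conclude
  have : Tendsto (fun n => Real.arccos (((L1 n)^2 + (L3 n)^2 - (L2 n)^2) / (2 * L1 n * L3 n)))
      atTop (𝓝 (Real.arccos 1)) :=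
    (Real.continuous_arccos.continuousAt.tendsto).comp hFlim
  rw [Real.arccos_one] at this
  exact this
end

section
/- Let (u_n) be a sequence in ℝ³ such that every u_n is nondegenerate, u_{i,n} → +∞, and the sequences (u_{j,n}) and (u_{k,n}) converge. Assume moreover that θ_ki^j(u_n) → β and θ_ij^k(u_n) → γ with β, γ ∈ (0, π). Then the three sequences h_jk^i(u_n), h_ki^j(u_n), h_ij^k(u_n) converge in ℝ, and the limit of h_jk^i(u_n) is positive. -/
open Real Filter Topology

lemma cos_ang_s13 (la lb lc : ℝ) (ha : 0 < la) (hb : 0 < lb)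
    (h1 : la < lb + lc) (h2 : lb < lc + la) (h3 : lc < la + lb) :
    Real.cos (ang la lb lc) = (la ^ 2 + lb ^ 2 - lc ^ 2) / (2 * la * lb) := by
  apply Real.cos_arccos
  · rw [le_div_iff₀ (by positivity)]; nlinarith
  · rw [div_le_one (by positivity)]; nlinarith

lemma sin_ang (la lb lc : ℝ) (ha : 0 < la) (hb : 0 < lb) :
    Real.sin (ang la lb lc) =
      Real.sqrt (4 * la ^ 2 * lb ^ 2 - (la ^ 2 + lb ^ 2 - lc ^ 2) ^ 2) / (2 * la * lb) := by
  rw [ang, Real.sin_arccos]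
  rw [show 1 - ((la ^ 2 + lb ^ 2 - lc ^ 2) / (2 * la * lb)) ^ 2
      = (4 * la ^ 2 * lb ^ 2 - (la ^ 2 + lb ^ 2 - lc ^ 2) ^ 2) * ((2 * la * lb)⁻¹) ^ 2 by
    field_simp; ring]
  rw [Real.sqrt_mul' _ (by positivity), Real.sqrt_sq (by positivity)]
  rw [div_eq_mul_inv]

lemma sin_ang_pos (la lb lc : ℝ) (ha : 0 < la) (hb : 0 < lb) (hc : 0 < lc)
    (h1 : la < lb + lc) (h2 : lb < lc + la) (h3 : lc < la + lb) :
    0 < Real.sin (ang la lb lc) := by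
  rw [sin_ang la lb lc ha hb]
  apply div_pos _ (by positivity)
  apply Real.sqrt_pos.2
  have p1 : 0 < (la + lb) ^ 2 - lc ^ 2 := by nlinarith
  have p2 : 0 < lc ^ 2 - (la - lb) ^ 2 := by nlinarith
  nlinarith [mul_pos p1 p2]

set_option maxHeartbeats 2000000 in
/-- If `u_i → +∞`, `u_j, u_k` converge and the angles at `j` and `k` converge to
non-zero limits, then the three heights converge and the limit of `h_jk^i` is positive. -/
theorem heights_converge (ri rj rk Iij Ijk Iki : ℝ) (hri : 0 < ri) (hrj : 0 < rj) (hrk : 0 < rk)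
    (hIij : 1 < Iij) (hIjk : 1 < Ijk) (hIki : 1 < Iki)
    (a b c : ℕ → ℝ) (aj ak β γ : ℝ)
    (hnd : ∀ n, NondegT ri rj rk Iij Ijk Iki (a n) (b n) (c n))
    (ha : Tendsto a atTop atTop) (hb : Tendsto b atTop (𝓝 aj))
    (hc : Tendsto c atTop (𝓝 ak))
    (hβ : β ∈ Set.Ioo (0:ℝ) π) (hγ : γ ∈ Set.Ioo (0:ℝ) π)
    (hθj : Tendsto (fun n => ThJ ri rj rk Iij Ijk Iki (a n) (b n) (c n)) atTop (𝓝 β))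
    (hθk : Tendsto (fun n => ThK ri rj rk Iij Ijk Iki (a n) (b n) (c n)) atTop (𝓝 γ)) :
    (∃ cI : ℝ, 0 < cI ∧
      Tendsto (fun n => Hjki ri rj rk Iij Ijk Iki (a n) (b n) (c n)) atTop (𝓝 cI)) ∧
    (∃ cJ : ℝ, Tendsto (fun n => Hkij ri rj rk Iij Ijk Iki (a n) (b n) (c n)) atTop (𝓝 cJ)) ∧
    (∃ cK : ℝ, Tendsto (fun n => Hijk ri rj rk Iij Ijk Iki (a n) (b n) (c n)) atTop (𝓝 cK)) := by
  have hIij0 : (0:ℝ) < Iij := by linarith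
  have hIjk0 : (0:ℝ) < Ijk := by linarith
  have hIki0 : (0:ℝ) < Iki := by linarith
  set X : ℕ → ℝ := fun n => Real.exp (a n) * ri with hXd
  set Y : ℕ → ℝ := fun n => Real.exp (b n) * rj with hYd
  set Z : ℕ → ℝ := fun n => Real.exp (c n) * rk with hZd
  have hX : ∀ n, 0 < X n := fun n => by positivity
  have hY : ∀ n, 0 < Y n := fun n => by positivity
  have hZ : ∀ n, 0 < Z n := fun n => by positivity
  set Yl : ℝ := Real.exp aj * rj with hYld
  set Zl : ℝ := Real.exp ak * rk with hZld
  have hYl : 0 < Yl := by positivity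
  have hZl : 0 < Zl := by positivity
  set L : ℝ := Real.sqrt (Yl ^ 2 + Zl ^ 2 + 2 * Ijk * Yl * Zl) with hLd
  have hLarg : 0 < Yl ^ 2 + Zl ^ 2 + 2 * Ijk * Yl * Zl := by nlinarith [mul_pos hYl hZl]
  have hL : 0 < L := Real.sqrt_pos.2 hLarg
  have hL2 : L ^ 2 = Yl ^ 2 + Zl ^ 2 + 2 * Ijk * Yl * Zl := Real.sq_sqrt hLarg.le
  have hXtop : Tendsto X atTop atTop := (Real.tendsto_exp_atTop.comp ha).atTop_mul_const hri
  have hYlim : Tendsto Y atTop (𝓝 Yl) := ((Real.continuous_exp.tendsto aj).comp hb).mul_const rj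
  have hZlim : Tendsto Z atTop (𝓝 Zl) := ((Real.continuous_exp.tendsto ak).comp hc).mul_const rk
  set t : ℕ → ℝ := fun n => Y n / X n with htd
  set s : ℕ → ℝ := fun n => Z n / X n with hsd
  have ht : Tendsto t atTop (𝓝 0) := hYlim.div_atTop hXtop
  have hs : Tendsto s atTop (𝓝 0) := hZlim.div_atTop hXtop
  have htpos : ∀ n, 0 < t n := fun n => div_pos (hY n) (hX n)
  have hspos : ∀ n, 0 < s n := fun n => div_pos (hZ n) (hX n)
  have hinv : Tendsto (fun n => 1 / X n) atTop (𝓝 0) := tendsto_const_nhds.div_atTop hXtop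
  -- edge lengths
  set lij : ℕ → ℝ := fun n => Lij ri rj rk Iij Ijk Iki (a n) (b n) (c n) with hlijd
  set ljk : ℕ → ℝ := fun n => Ljk ri rj rk Iij Ijk Iki (a n) (b n) (c n) with hljkd
  set lki : ℕ → ℝ := fun n => Lki ri rj rk Iij Ijk Iki (a n) (b n) (c n) with hlkid
  have hlij_eq : ∀ n, lij n = Real.sqrt (X n ^ 2 + Y n ^ 2 + 2 * Iij * X n * Y n) :=
    fun n => rfl
  have hljk_eq : ∀ n, ljk n = Real.sqrt (Y n ^ 2 + Z n ^ 2 + 2 * Ijk * Y n * Z n) :=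
    fun n => rfl
  have hlki_eq : ∀ n, lki n = Real.sqrt (Z n ^ 2 + X n ^ 2 + 2 * Iki * Z n * X n) :=
    fun n => rfl
  have hlij_pos : ∀ n, 0 < lij n := fun n => by
    rw [hlij_eq]
    exact Real.sqrt_pos.2 (by nlinarith [mul_pos (hX n) (hY n), sq_nonneg (X n), sq_nonneg (Y n)])
  have hljk_pos : ∀ n, 0 < ljk n := fun n => by
    rw [hljk_eq]
    exact Real.sqrt_pos.2 (by nlinarith [mul_pos (hY n) (hZ n), sq_nonneg (Y n), sq_nonneg (Z n)])
  have hlki_pos : ∀ n, 0 < lki n := fun n => by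
    rw [hlki_eq]
    exact Real.sqrt_pos.2 (by nlinarith [mul_pos (hZ n) (hX n), sq_nonneg (Z n), sq_nonneg (X n)])
  have hlij_sq : ∀ n, (lij n) ^ 2 = X n ^ 2 + Y n ^ 2 + 2 * Iij * X n * Y n := fun n => by
    rw [hlij_eq]
    exact Real.sq_sqrt (by nlinarith [mul_pos (hX n) (hY n), sq_nonneg (X n), sq_nonneg (Y n)])
  have hljk_sq : ∀ n, (ljk n) ^ 2 = Y n ^ 2 + Z n ^ 2 + 2 * Ijk * Y n * Z n := fun n => by
    rw [hljk_eq]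
    exact Real.sq_sqrt (by nlinarith [mul_pos (hY n) (hZ n), sq_nonneg (Y n), sq_nonneg (Z n)])
  have hlki_sq : ∀ n, (lki n) ^ 2 = Z n ^ 2 + X n ^ 2 + 2 * Iki * Z n * X n := fun n => by
    rw [hlki_eq]
    exact Real.sq_sqrt (by nlinarith [mul_pos (hZ n) (hX n), sq_nonneg (Z n), sq_nonneg (X n)])
  have hljk_lim : Tendsto ljk atTop (𝓝 L) := by
    have h1 : Tendsto (fun n => Y n ^ 2 + Z n ^ 2 + 2 * Ijk * Y n * Z n) atTop
        (𝓝 (Yl ^ 2 + Zl ^ 2 + 2 * Ijk * Yl * Zl)) :=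
      ((hYlim.pow 2).add (hZlim.pow 2)).add ((tendsto_const_nhds.mul hYlim).mul hZlim)
    exact Tendsto.congr (fun n => (hljk_eq n).symm) h1.sqrt
  -- nondegeneracy
  have hnd' : ∀ n, lij n < ljk n + lki n ∧ ljk n < lki n + lij n ∧ lki n < lij n + ljk n :=
    fun n => hnd n
  -- scaled factors
  set qij : ℕ → ℝ := fun n => 1 + t n ^ 2 + 2 * Iij * t n with hqijd
  set qki : ℕ → ℝ := fun n => s n ^ 2 + 1 + 2 * Iki * s n with hqkid
  have hqij_pos : ∀ n, 0 < qij n := fun n => by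
    have := htpos n; simp only [hqijd]; nlinarith
  have hqki_pos : ∀ n, 0 < qki n := fun n => by
    have := hspos n; simp only [hqkid]; nlinarith
  have hqij_lim : Tendsto qij atTop (𝓝 1) := by
    have h1 : Tendsto qij atTop (𝓝 (1 + (0:ℝ) ^ 2 + 2 * Iij * 0)) :=
      (tendsto_const_nhds.add (ht.pow 2)).add (tendsto_const_nhds.mul ht)
    simpa using h1
  have hqki_lim : Tendsto qki atTop (𝓝 1) := by
    have h1 : Tendsto qki atTop (𝓝 ((0:ℝ) ^ 2 + 1 + 2 * Iki * 0)) :=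
      ((hs.pow 2).add tendsto_const_nhds).add (tendsto_const_nhds.mul hs)
    simpa using h1
  have hsqij_lim : Tendsto (fun n => Real.sqrt (qij n)) atTop (𝓝 1) := by
    simpa using hqij_lim.sqrt
  have hsqki_lim : Tendsto (fun n => Real.sqrt (qki n)) atTop (𝓝 1) := by
    simpa using hqki_lim.sqrt
  have hsqij_pos : ∀ n, 0 < Real.sqrt (qij n) := fun n => Real.sqrt_pos.2 (hqij_pos n)
  have hsqki_pos : ∀ n, 0 < Real.sqrt (qki n) := fun n => Real.sqrt_pos.2 (hqki_pos n)
  have hlij_fact : ∀ n, lij n = X n * Real.sqrt (qij n) := by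
    intro n
    have hXne := (hX n).ne'
    rw [hlij_eq, show X n ^ 2 + Y n ^ 2 + 2 * Iij * X n * Y n = X n ^ 2 * qij n by
      simp only [hqijd, htd]; field_simp, Real.sqrt_mul (sq_nonneg _),
      Real.sqrt_sq (hX n).le]
  have hlki_fact : ∀ n, lki n = X n * Real.sqrt (qki n) := by
    intro n
    have hXne := (hX n).ne'
    rw [hlki_eq, show Z n ^ 2 + X n ^ 2 + 2 * Iki * Z n * X n = X n ^ 2 * qki n by
      simp only [hqkid, hsd]; field_simp, Real.sqrt_mul (sq_nonneg _),
      Real.sqrt_sq (hX n).le]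
  -- angle facts
  have hThJ : ∀ n, ThJ ri rj rk Iij Ijk Iki (a n) (b n) (c n) = ang (lij n) (ljk n) (lki n) :=
    fun n => rfl
  have hThI : ∀ n, ThI ri rj rk Iij Ijk Iki (a n) (b n) (c n) = ang (lij n) (lki n) (ljk n) :=
    fun n => rfl
  have hThK : ∀ n, ThK ri rj rk Iij Ijk Iki (a n) (b n) (c n) = ang (ljk n) (lki n) (lij n) :=
    fun n => rfl
  have hcosJ : ∀ n, Real.cos (ThJ ri rj rk Iij Ijk Iki (a n) (b n) (c n)) =
      ((lij n) ^ 2 + (ljk n) ^ 2 - (lki n) ^ 2) / (2 * lij n * ljk n) := fun n => by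
    rw [hThJ]
    exact cos_ang_s13 _ _ _ (hlij_pos n) (hljk_pos n) (hnd' n).1 (hnd' n).2.1 (hnd' n).2.2
  have hcosI : ∀ n, Real.cos (ThI ri rj rk Iij Ijk Iki (a n) (b n) (c n)) =
      ((lij n) ^ 2 + (lki n) ^ 2 - (ljk n) ^ 2) / (2 * lij n * lki n) := fun n => by
    rw [hThI]
    exact cos_ang_s13 _ _ _ (hlij_pos n) (hlki_pos n) (by linarith [(hnd' n).1])
      (by linarith [(hnd' n).2.2]) (by linarith [(hnd' n).2.1])
  have hcosK : ∀ n, Real.cos (ThK ri rj rk Iij Ijk Iki (a n) (b n) (c n)) =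
      ((ljk n) ^ 2 + (lki n) ^ 2 - (lij n) ^ 2) / (2 * ljk n * lki n) := fun n => by
    rw [hThK]
    exact cos_ang_s13 _ _ _ (hljk_pos n) (hlki_pos n) (by linarith [(hnd' n).2.1])
      (by linarith [(hnd' n).2.2]) (by linarith [(hnd' n).1])
  have hsinJpos : ∀ n, 0 < Real.sin (ThJ ri rj rk Iij Ijk Iki (a n) (b n) (c n)) := fun n => by
    rw [hThJ]
    exact sin_ang_pos _ _ _ (hlij_pos n) (hljk_pos n) (hlki_pos n)
      (hnd' n).1 (hnd' n).2.1 (hnd' n).2.2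
  have hsinIpos : ∀ n, 0 < Real.sin (ThI ri rj rk Iij Ijk Iki (a n) (b n) (c n)) := fun n => by
    rw [hThI]
    exact sin_ang_pos _ _ _ (hlij_pos n) (hlki_pos n) (hljk_pos n) (by linarith [(hnd' n).1])
      (by linarith [(hnd' n).2.2]) (by linarith [(hnd' n).2.1])
  have hsinKpos : ∀ n, 0 < Real.sin (ThK ri rj rk Iij Ijk Iki (a n) (b n) (c n)) := fun n => by
    rw [hThK]
    exact sin_ang_pos _ _ _ (hljk_pos n) (hlki_pos n) (hlij_pos n) (by linarith [(hnd' n).2.1])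
      (by linarith [(hnd' n).2.2]) (by linarith [(hnd' n).1])
  have hlaw : ∀ n, ljk n * Real.sin (ThJ ri rj rk Iij Ijk Iki (a n) (b n) (c n)) =
      lki n * Real.sin (ThI ri rj rk Iij Ijk Iki (a n) (b n) (c n)) := fun n => by
    rw [hThJ, hThI, sin_ang _ _ _ (hlij_pos n) (hljk_pos n),
      sin_ang _ _ _ (hlij_pos n) (hlki_pos n),
      show 4 * (lij n) ^ 2 * (ljk n) ^ 2 - ((lij n) ^ 2 + (ljk n) ^ 2 - (lki n) ^ 2) ^ 2
        = 4 * (lij n) ^ 2 * (lki n) ^ 2 - ((lij n) ^ 2 + (lki n) ^ 2 - (ljk n) ^ 2) ^ 2 by ring]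
    have h1 := (hlij_pos n).ne'
    have h2 := (hljk_pos n).ne'
    have h3 := (hlki_pos n).ne'
    field_simp
  -- angle limits
  have hcosJlim : Tendsto (fun n => Real.cos (ThJ ri rj rk Iij Ijk Iki (a n) (b n) (c n)))
      atTop (𝓝 (Real.cos β)) := (Real.continuous_cos.tendsto β).comp hθj
  have hsinJlim : Tendsto (fun n => Real.sin (ThJ ri rj rk Iij Ijk Iki (a n) (b n) (c n)))
      atTop (𝓝 (Real.sin β)) := (Real.continuous_sin.tendsto β).comp hθj
  have hcosKlim : Tendsto (fun n => Real.cos (ThK ri rj rk Iij Ijk Iki (a n) (b n) (c n)))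
      atTop (𝓝 (Real.cos γ)) := (Real.continuous_cos.tendsto γ).comp hθk
  have hsinKlim : Tendsto (fun n => Real.sin (ThK ri rj rk Iij Ijk Iki (a n) (b n) (c n)))
      atTop (𝓝 (Real.sin γ)) := (Real.continuous_sin.tendsto γ).comp hθk
  have hsinβ : 0 < Real.sin β := Real.sin_pos_of_pos_of_lt_pi hβ.1 hβ.2
  have hsinγ : 0 < Real.sin γ := Real.sin_pos_of_pos_of_lt_pi hγ.1 hγ.2
  -- limits of the d-quantities
  have hDji : Tendsto (fun n => Dji ri rj rk Iij Ijk Iki (a n) (b n) (c n)) atTop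
      (𝓝 (Iij * Yl)) := by
    have hpt : ∀ n, Dji ri rj rk Iij Ijk Iki (a n) (b n) (c n)
        = Y n * (t n + Iij) / Real.sqrt (qij n) := by
      intro n
      show (Y n ^ 2 + Iij * Y n * X n) / lij n = _
      rw [hlij_fact n]
      have h1 := (hX n).ne'
      have h2 := (hsqij_pos n).ne'
      simp only [htd]
      field_simp
    have h1 : Tendsto (fun n => Y n * (t n + Iij) / Real.sqrt (qij n)) atTop
        (𝓝 (Yl * (0 + Iij) / 1)) :=
      (hYlim.mul (ht.add tendsto_const_nhds)).div hsqij_lim one_ne_zero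
    refine Tendsto.congr (fun n => (hpt n).symm) ?_
    simpa [mul_comm] using h1
  have hDki : Tendsto (fun n => Dki ri rj rk Iij Ijk Iki (a n) (b n) (c n)) atTop
      (𝓝 (Iki * Zl)) := by
    have hpt : ∀ n, Dki ri rj rk Iij Ijk Iki (a n) (b n) (c n)
        = Z n * (s n + Iki) / Real.sqrt (qki n) := by
      intro n
      show (Z n ^ 2 + Iki * Z n * X n) / lki n = _
      rw [hlki_fact n]
      have h1 := (hX n).ne'
      have h2 := (hsqki_pos n).ne'
      simp only [hsd]
      field_simp
    have h1 : Tendsto (fun n => Z n * (s n + Iki) / Real.sqrt (qki n)) atTop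
        (𝓝 (Zl * (0 + Iki) / 1)) :=
      (hZlim.mul (hs.add tendsto_const_nhds)).div hsqki_lim one_ne_zero
    refine Tendsto.congr (fun n => (hpt n).symm) ?_
    simpa [mul_comm] using h1
  have hDjk : Tendsto (fun n => Djk ri rj rk Iij Ijk Iki (a n) (b n) (c n)) atTop
      (𝓝 ((Yl ^ 2 + Ijk * Yl * Zl) / L)) := by
    have hnum : Tendsto (fun n => Y n ^ 2 + Ijk * Y n * Z n) atTop
        (𝓝 (Yl ^ 2 + Ijk * Yl * Zl)) :=
      (hYlim.pow 2).add ((tendsto_const_nhds.mul hYlim).mul hZlim)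
    exact hnum.div hljk_lim hL.ne'
  have hDkj : Tendsto (fun n => Dkj ri rj rk Iij Ijk Iki (a n) (b n) (c n)) atTop
      (𝓝 ((Zl ^ 2 + Ijk * Zl * Yl) / L)) := by
    have hnum : Tendsto (fun n => Z n ^ 2 + Ijk * Z n * Y n) atTop
        (𝓝 (Zl ^ 2 + Ijk * Zl * Yl)) :=
      (hZlim.pow 2).add ((tendsto_const_nhds.mul hZlim).mul hYlim)
    exact hnum.div hljk_lim hL.ne'
  -- the value of cos β
  have hcosβ : Real.cos β = (Iij * Yl - Iki * Zl) / L := by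
    have hpt : ∀ n, Real.cos (ThJ ri rj rk Iij Ijk Iki (a n) (b n) (c n))
        = ((Y n ^ 2 - Z n ^ 2 + (ljk n) ^ 2) * (1 / X n) + 2 * (Iij * Y n - Iki * Z n)) /
          (2 * Real.sqrt (qij n) * ljk n) := by
      intro n
      rw [hcosJ n, hlij_fact n]
      have h1 := (hX n).ne'
      have h2 := (hsqij_pos n).ne'
      have h3 := (hljk_pos n).ne'
      have hq : Real.sqrt (qij n) ^ 2 = qij n := Real.sq_sqrt (hqij_pos n).le
      have hqij' : X n ^ 2 * qij n = X n ^ 2 + Y n ^ 2 + 2 * Iij * X n * Y n := by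
        simp only [hqijd, htd]; field_simp
      rw [div_eq_div_iff (by positivity) (by positivity), mul_pow, hq, hqij', hlki_sq n]
      field_simp
      ring
    have hlim : Tendsto (fun n =>
        ((Y n ^ 2 - Z n ^ 2 + (ljk n) ^ 2) * (1 / X n) + 2 * (Iij * Y n - Iki * Z n)) /
          (2 * Real.sqrt (qij n) * ljk n)) atTop
        (𝓝 (((Yl ^ 2 - Zl ^ 2 + L ^ 2) * 0 + 2 * (Iij * Yl - Iki * Zl)) / (2 * 1 * L))) := by
      refine Tendsto.div ?_ ?_ (by positivity)
      · exact ((((hYlim.pow 2).sub (hZlim.pow 2)).add (hljk_lim.pow 2)).mul hinv).add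
          (tendsto_const_nhds.mul ((tendsto_const_nhds.mul hYlim).sub
            (tendsto_const_nhds.mul hZlim)))
      · exact (tendsto_const_nhds.mul hsqij_lim).mul hljk_lim
    have huniq := tendsto_nhds_unique hcosJlim (Tendsto.congr (fun n => (hpt n).symm) hlim)
    rw [huniq]
    field_simp
    ring
  -- branch 1 : H_jki
  have hHjki : Tendsto (fun n => Hjki ri rj rk Iij Ijk Iki (a n) (b n) (c n)) atTop
      (𝓝 ((Iij * Yl - (Yl ^ 2 + Ijk * Yl * Zl) / L * Real.cos β) / Real.sin β)) :=
    (hDji.sub (hDjk.mul hcosJlim)).div hsinJlim hsinβ.ne'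
  have hcIpos : 0 < (Iij * Yl - (Yl ^ 2 + Ijk * Yl * Zl) / L * Real.cos β) / Real.sin β := by
    apply div_pos _ hsinβ
    rw [hcosβ]
    have key : Iij * Yl - (Yl ^ 2 + Ijk * Yl * Zl) / L * ((Iij * Yl - Iki * Zl) / L)
        = Yl * Zl * (Iij * Zl + Iki * Yl + Ijk * (Iij * Yl + Iki * Zl)) / L ^ 2 := by
      have step : Iij * Yl - (Yl ^ 2 + Ijk * Yl * Zl) / L * ((Iij * Yl - Iki * Zl) / L)
          = (Iij * Yl * L ^ 2 - (Yl ^ 2 + Ijk * Yl * Zl) * (Iij * Yl - Iki * Zl)) / L ^ 2 := by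
        field_simp
      rw [step]
      congr 1
      linear_combination (Iij * Yl) * hL2
    rw [key]
    have hfac : 0 < Iij * Zl + Iki * Yl + Ijk * (Iij * Yl + Iki * Zl) := by positivity
    positivity
  -- branch 2 : H_kij
  have hHkij : Tendsto (fun n => Hkij ri rj rk Iij Ijk Iki (a n) (b n) (c n)) atTop
      (𝓝 (((Zl ^ 2 + Ijk * Zl * Yl) / L - Iki * Zl * Real.cos γ) / Real.sin γ)) :=
    (hDkj.sub (hDki.mul hcosKlim)).div hsinKlim hsinγ.ne'
  -- branch 3 : H_ijk
  have hkey : ∀ n, Hijk ri rj rk Iij Ijk Iki (a n) (b n) (c n)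
      = (2 * Y n * ((1 - Iij ^ 2) * Y n + (Ijk + Iij * Iki) * Z n
            + t n * (Z n * (Iki + Iij * Ijk)))) /
        (2 * qij n * ljk n * Real.sin (ThJ ri rj rk Iij Ijk Iki (a n) (b n) (c n))) := by
    intro n
    have h1 := (hlij_pos n).ne'
    have h2 := (hljk_pos n).ne'
    have h3 := (hlki_pos n).ne'
    have hsI := (hsinIpos n).ne'
    have hsJ := (hsinJpos n).ne'
    have hXne := (hX n).ne'
    have step1 : Hijk ri rj rk Iij Ijk Iki (a n) (b n) (c n)
        = (2 * (lij n) ^ 2 * (X n ^ 2 + Iki * X n * Z n)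
            - (X n ^ 2 + Iij * X n * Y n) * ((lij n) ^ 2 + (lki n) ^ 2 - (ljk n) ^ 2)) /
          (2 * (lij n) ^ 2 * ljk n * Real.sin (ThJ ri rj rk Iij Ijk Iki (a n) (b n) (c n))) := by
      show (Dik ri rj rk Iij Ijk Iki (a n) (b n) (c n)
          - Dij ri rj rk Iij Ijk Iki (a n) (b n) (c n)
            * Real.cos (ThI ri rj rk Iij Ijk Iki (a n) (b n) (c n)))
          / Real.sin (ThI ri rj rk Iij Ijk Iki (a n) (b n) (c n)) = _
      rw [hcosI n]
      rw [show Dik ri rj rk Iij Ijk Iki (a n) (b n) (c n)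
          = (X n ^ 2 + Iki * X n * Z n) / lki n from rfl]
      rw [show Dij ri rj rk Iij Ijk Iki (a n) (b n) (c n)
          = (X n ^ 2 + Iij * X n * Y n) / lij n from rfl]
      rw [div_eq_div_iff hsI (by positivity)]
      calc ((X n ^ 2 + Iki * X n * Z n) / lki n - (X n ^ 2 + Iij * X n * Y n) / lij n *
              (((lij n) ^ 2 + (lki n) ^ 2 - (ljk n) ^ 2) / (2 * lij n * lki n)))
            * (2 * (lij n) ^ 2 * ljk n * Real.sin (ThJ ri rj rk Iij Ijk Iki (a n) (b n) (c n)))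
          = ((X n ^ 2 + Iki * X n * Z n) / lki n - (X n ^ 2 + Iij * X n * Y n) / lij n *
              (((lij n) ^ 2 + (lki n) ^ 2 - (ljk n) ^ 2) / (2 * lij n * lki n)))
            * (2 * (lij n) ^ 2)
            * (ljk n * Real.sin (ThJ ri rj rk Iij Ijk Iki (a n) (b n) (c n))) := by ring
        _ = ((X n ^ 2 + Iki * X n * Z n) / lki n - (X n ^ 2 + Iij * X n * Y n) / lij n *
              (((lij n) ^ 2 + (lki n) ^ 2 - (ljk n) ^ 2) / (2 * lij n * lki n)))
            * (2 * (lij n) ^ 2)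
            * (lki n * Real.sin (ThI ri rj rk Iij Ijk Iki (a n) (b n) (c n))) := by
              rw [hlaw n]
        _ = (2 * (lij n) ^ 2 * (X n ^ 2 + Iki * X n * Z n)
            - (X n ^ 2 + Iij * X n * Y n) * ((lij n) ^ 2 + (lki n) ^ 2 - (ljk n) ^ 2))
            * Real.sin (ThI ri rj rk Iij Ijk Iki (a n) (b n) (c n)) := by
              field_simp
    rw [step1]
    have hN : 2 * (lij n) ^ 2 * (X n ^ 2 + Iki * X n * Z n)
        - (X n ^ 2 + Iij * X n * Y n) * ((lij n) ^ 2 + (lki n) ^ 2 - (ljk n) ^ 2)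
        = X n ^ 2 * (2 * Y n * ((1 - Iij ^ 2) * Y n + (Ijk + Iij * Iki) * Z n
            + t n * (Z n * (Iki + Iij * Ijk)))) := by
      rw [hlij_sq n, hlki_sq n, hljk_sq n]
      simp only [htd]
      field_simp
      ring
    have hD : 2 * (lij n) ^ 2 * ljk n * Real.sin (ThJ ri rj rk Iij Ijk Iki (a n) (b n) (c n))
        = X n ^ 2 * (2 * qij n * ljk n
            * Real.sin (ThJ ri rj rk Iij Ijk Iki (a n) (b n) (c n))) := by
      have hq2 : (lij n) ^ 2 = X n ^ 2 * qij n := by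
        rw [hlij_sq n]; simp only [hqijd, htd]; field_simp
      rw [hq2]; ring
    rw [hN, hD, mul_div_mul_left _ _ (by positivity : (X n ^ 2 : ℝ) ≠ 0)]
  have hHijk : Tendsto (fun n => Hijk ri rj rk Iij Ijk Iki (a n) (b n) (c n)) atTop
      (𝓝 ((2 * Yl * ((1 - Iij ^ 2) * Yl + (Ijk + Iij * Iki) * Zl
            + 0 * (Zl * (Iki + Iij * Ijk)))) / (2 * 1 * L * Real.sin β))) := by
    refine Tendsto.congr (fun n => (hkey n).symm) ?_
    refine Tendsto.div ?_ ?_ (by positivity)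
    · exact (tendsto_const_nhds.mul hYlim).mul
        ((((tendsto_const_nhds.mul hYlim)).add (tendsto_const_nhds.mul hZlim)).add
          (ht.mul (hZlim.mul tendsto_const_nhds)))
    · exact ((tendsto_const_nhds.mul hqij_lim).mul hljk_lim).mul hsinJlim
  exact ⟨⟨_, hcIpos, hHjki⟩, ⟨_, hHkij⟩, ⟨_, hHijk⟩⟩
end
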